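/- arXiv:2501.18330 — 7 statements merged into one kernel-verified Lean document; each statement's English description precedes it below -/
import Mathlib

section
/- Let Π be a symmetric (q+r)×(q+r) real matrix partitioned into blocks Π11, Π12, Π21, Π22 with Π22 ≤ 0, Π11 − Π12 Π22† Π21 ≥ 0 and ker Π22 ⊆ ker Π12. Then the set Z_r(Π) = { Z ∈ ℝ^{r×q} : [I; Z]ᵀ Π [I; Z] ≥ 0 } is convex. -/
open Matrix

/-- The four Penrose conditions: `X` is the Moore–Penrose pseudoinverse of `A`. -/
def IsMoorePenrose {r : ℕ} (A X : Matrix (Fin r) (Fin r) ℝ) : Prop :=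
  A * X * A = A ∧ X * A * X = X ∧ (A * X)ᵀ = A * X ∧ (X * A)ᵀ = X * A

/-- The set `Z_r(Π)` of matrices `Z` with `[I; Z]ᵀ Π [I; Z] ≥ 0`. -/
def Zset {q r : ℕ} (Pm : Matrix (Fin q ⊕ Fin r) (Fin q ⊕ Fin r) ℝ) :
    Set (Matrix (Fin r) (Fin q) ℝ) :=
  {Z | ((fromRows (1 : Matrix (Fin q) (Fin q) ℝ) Z)ᵀ * Pm *
        fromRows (1 : Matrix (Fin q) (Fin q) ℝ) Z).PosSemidef}

lemma psd_add {n : ℕ} {A B : Matrix (Fin n) (Fin n) ℝ} (hA : A.PosSemidef) (hB : B.PosSemidef) :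
    (A + B).PosSemidef := by
  refine ⟨hA.1.add hB.1, fun x => ?_⟩
  exact (hA.add hB).2 x

lemma psd_smul {n : ℕ} {A : Matrix (Fin n) (Fin n) ℝ} (hA : A.PosSemidef) {c : ℝ} (hc : 0 ≤ c) :
    (c • A).PosSemidef := by
  refine ⟨?_, fun x => ?_⟩
  · show (c • A)ᴴ = c • A
    rw [conjTranspose_smul, hA.1]
    simp
  exact (hA.smul hc).2 x

lemma fval {q r : ℕ} (P11 : Matrix (Fin q) (Fin q) ℝ) (P12 : Matrix (Fin q) (Fin r) ℝ)
    (P21 : Matrix (Fin r) (Fin q) ℝ) (P22 : Matrix (Fin r) (Fin r) ℝ)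
    (Z : Matrix (Fin r) (Fin q) ℝ) :
    (fromRows (1 : Matrix (Fin q) (Fin q) ℝ) Z)ᵀ * fromBlocks P11 P12 P21 P22 *
      fromRows (1 : Matrix (Fin q) (Fin q) ℝ) Z
      = P11 + P12 * Z + Zᵀ * P21 + Zᵀ * (P22 * Z) := by
  rw [transpose_fromRows, Matrix.mul_assoc, fromBlocks_mul_fromRows,
    fromCols_mul_fromRows]
  simp [Matrix.mul_add]; abel

lemma key_identity {q r : ℕ} (P11 : Matrix (Fin q) (Fin q) ℝ) (P12 : Matrix (Fin q) (Fin r) ℝ)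
    (P22 : Matrix (Fin r) (Fin r) ℝ) (Z1 Z2 : Matrix (Fin r) (Fin q) ℝ)
    (a b : ℝ) (hab : a + b = 1) :
    P11 + P12 * (a • Z1 + b • Z2) + (a • Z1 + b • Z2)ᵀ * P12ᵀ +
        (a • Z1 + b • Z2)ᵀ * (P22 * (a • Z1 + b • Z2))
      = a • (P11 + P12 * Z1 + Z1ᵀ * P12ᵀ + Z1ᵀ * (P22 * Z1)) +
        b • (P11 + P12 * Z2 + Z2ᵀ * P12ᵀ + Z2ᵀ * (P22 * Z2)) +
        (a * b) • ((Z1 - Z2)ᵀ * (-P22 * (Z1 - Z2))) := by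
  have hb : b = 1 - a := by linarith
  subst hb
  simp only [sub_eq_add_neg, transpose_add, transpose_smul, transpose_neg, neg_mul,
    Matrix.mul_add, Matrix.add_mul, Matrix.mul_smul, Matrix.smul_mul, Matrix.mul_neg,
    Matrix.neg_mul, smul_smul]
  module

theorem stmt1 {q r : ℕ}
    (P11 : Matrix (Fin q) (Fin q) ℝ) (P12 : Matrix (Fin q) (Fin r) ℝ)
    (P22 X : Matrix (Fin r) (Fin r) ℝ)
    (h11 : P11.IsSymm) (h22 : P22.IsSymm)
    (hX : IsMoorePenrose P22 X)
    (h22neg : (-P22).PosSemidef)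
    (hSchur : (P11 - P12 * X * P12ᵀ).PosSemidef)
    (hker : ∀ x : Fin r → ℝ, P22.mulVec x = 0 → P12.mulVec x = 0) :
    Convex ℝ (Zset (fromBlocks P11 P12 P12ᵀ P22)) := by
  intro Z1 hZ1 Z2 hZ2 a b ha hb hab
  simp only [Zset, Set.mem_setOf_eq] at hZ1 hZ2 ⊢
  rw [fval] at hZ1 hZ2 ⊢
  rw [key_identity P11 P12 P22 Z1 Z2 a b hab]
  have h3 : ((Z1 - Z2)ᵀ * (-P22 * (Z1 - Z2))).PosSemidef := by
    have := h22neg.conjTranspose_mul_mul_same (Z1 - Z2)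
    simpa [Matrix.mul_assoc] using this
  exact psd_add (psd_add (psd_smul hZ1 ha) (psd_smul hZ2 hb)) (psd_smul h3 (mul_nonneg ha hb))
end

section
/- Let Π be a symmetric (q+r)×(q+r) matrix with blocks Π11, Π12, Π21, Π22 satisfying Π22 ≤ 0, Π11 − Π12 Π22† Π21 ≥ 0, ker Π22 ⊆ ker Π12. If moreover Π22 < 0 (negative definite), then the set Z_r(Π) = { Z ∈ ℝ^{r×q} : [I; Z]ᵀ Π [I; Z] ≥ 0 } is bounded. -/
open Matrix

open scoped MatrixOrder in
lemma coercive {r : ℕ} (A : Matrix (Fin r) (Fin r) ℝ) (hA : A.PosDef) :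
    ∃ c0 : ℝ, 0 ≤ c0 ∧ ∀ x : Fin r → ℝ, x ⬝ᵥ x ≤ c0 * (x ⬝ᵥ A *ᵥ x) := by
  set B := CFC.sqrt A with hBdef
  have hB : B.PosSemidef := (CFC.sqrt_nonneg A).posSemidef
  have hBsym : Bᵀ = B := by
    have := hB.isHermitian
    simpa [Matrix.IsHermitian, Matrix.conjTranspose_eq_transpose_of_trivial] using this
  have hBB : B * B = A := CFC.sqrt_mul_sqrt_self A hA.posSemidef.nonneg
  have hdet : IsUnit B.det := by
    have h1 : B.det * B.det = A.det := by rw [← det_mul, hBB]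
    have h2 : 0 < A.det := hA.det_pos
    refine isUnit_iff_ne_zero.2 fun h => ?_
    rw [h, mul_zero] at h1
    exact absurd (h1 ▸ h2) (lt_irrefl (0:ℝ))
  set C := B⁻¹ with hCdef
  have hCB : C * B = 1 := nonsing_inv_mul B hdet
  refine ⟨∑ i, ∑ j, (C i j)^2, by positivity, fun x => ?_⟩
  have hAx : x ⬝ᵥ A *ᵥ x = (B *ᵥ x) ⬝ᵥ (B *ᵥ x) := by
    rw [← hBB, ← mulVec_mulVec, dotProduct_mulVec, ← vecMul_transpose, hBsym]
  have hx : x = C *ᵥ (B *ᵥ x) := by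
    rw [mulVec_mulVec, hCB, one_mulVec]
  rw [hAx]
  set y := B *ᵥ x with hy
  calc x ⬝ᵥ x = ∑ i, (x i)^2 := by simp [dotProduct, sq]
    _ ≤ ∑ i, (∑ j, (C i j)^2) * (∑ j, (y j)^2) := by
        refine Finset.sum_le_sum fun i _ => ?_
        have : x i = ∑ j, C i j * y j := by rw [hx]; rfl
        rw [this]
        exact Finset.sum_mul_sq_le_sq_mul_sq _ _ _
    _ = (∑ i, ∑ j, (C i j)^2) * (y ⬝ᵥ y) := by
        rw [← Finset.sum_mul]; simp [dotProduct, sq]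

lemma zset_ineq {q r : ℕ} (P11 : Matrix (Fin q) (Fin q) ℝ) (P12 : Matrix (Fin q) (Fin r) ℝ)
    (P22 : Matrix (Fin r) (Fin r) ℝ) {Z : Matrix (Fin r) (Fin q) ℝ}
    (hZ : Z ∈ Zset (fromBlocks P11 P12 P12ᵀ P22)) (v : Fin q → ℝ) :
    0 ≤ v ⬝ᵥ P11 *ᵥ v + 2 * (v ⬝ᵥ P12 *ᵥ (Z *ᵥ v)) + (Z *ᵥ v) ⬝ᵥ P22 *ᵥ (Z *ᵥ v) := by
  have h0 := Matrix.PosSemidef.dotProduct_mulVec_nonneg hZ v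
  set L := fromRows (1 : Matrix (Fin q) (Fin q) ℝ) Z with hL
  have hLv : L *ᵥ v = Sum.elim v (Z *ᵥ v) := by
    rw [hL, fromRows_mulVec, one_mulVec]
  have hrw : v ⬝ᵥ (Lᵀ * fromBlocks P11 P12 P12ᵀ P22 * L) *ᵥ v
      = (L *ᵥ v) ⬝ᵥ (fromBlocks P11 P12 P12ᵀ P22) *ᵥ (L *ᵥ v) := by
    rw [← mulVec_mulVec, ← mulVec_mulVec, dotProduct_mulVec, vecMul_transpose]
  have hsym : (Z *ᵥ v) ⬝ᵥ P12ᵀ *ᵥ v = v ⬝ᵥ P12 *ᵥ (Z *ᵥ v) := by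
    rw [dotProduct_mulVec, ← mulVec_transpose, transpose_transpose, dotProduct_comm]
  simp only [star_trivial, RCLike.re_to_real] at h0
  rw [hrw, hLv, fromBlocks_mulVec, dotProduct_block] at h0
  simp only [Sum.elim_comp_inl, Sum.elim_comp_inr, dotProduct_add] at h0
  rw [hsym] at h0
  linarith

set_option maxHeartbeats 1000000 in
theorem stmt2 {q r : ℕ}
    (P11 : Matrix (Fin q) (Fin q) ℝ) (P12 : Matrix (Fin q) (Fin r) ℝ)
    (P22 X : Matrix (Fin r) (Fin r) ℝ)
    (h11 : P11.IsSymm) (h22 : P22.IsSymm)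
    (hX : IsMoorePenrose P22 X)
    (h22neg : (-P22).PosSemidef)
    (hSchur : (P11 - P12 * X * P12ᵀ).PosSemidef)
    (hker : ∀ x : Fin r → ℝ, P22.mulVec x = 0 → P12.mulVec x = 0)
    (h22negdef : (-P22).PosDef) :
    ∃ c : ℝ, ∀ Z ∈ Zset (fromBlocks P11 P12 P12ᵀ P22), ∀ i j, |Z i j| ≤ c := by
  obtain ⟨c0, hc0, hc⟩ := coercive (-P22) h22negdef
  set u : Fin q → (Fin r → ℝ) := fun j => P12ᵀ *ᵥ Pi.single j 1 with hu
  set β : Fin q → ℝ := fun j => c0 * Real.sqrt (u j ⬝ᵥ u j) with hβ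
  set γ : Fin q → ℝ := fun j =>
    c0 * ((Pi.single j 1 : Fin q → ℝ) ⬝ᵥ P11 *ᵥ (Pi.single j 1 : Fin q → ℝ)) with hγ
  have hβnn : ∀ k, 0 ≤ β k := fun k => mul_nonneg hc0 (Real.sqrt_nonneg _)
  refine ⟨∑ k, (β k + Real.sqrt ((β k)^2 + γ k)), fun Z hZ i j => ?_⟩
  set v : Fin q → ℝ := Pi.single j 1 with hv
  set w : Fin r → ℝ := Z *ᵥ v with hw
  have hwwnn : (0:ℝ) ≤ w ⬝ᵥ w := Finset.sum_nonneg fun k _ => mul_self_nonneg _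
  set t : ℝ := Real.sqrt (w ⬝ᵥ w) with ht
  have htnn : 0 ≤ t := Real.sqrt_nonneg _
  have ht2 : t^2 = w ⬝ᵥ w := Real.sq_sqrt hwwnn
  -- quadratic inequality
  have hq := zset_ineq P11 P12 P22 hZ v
  have hb : v ⬝ᵥ P12 *ᵥ w = u j ⬝ᵥ w := by
    rw [dotProduct_mulVec, ← mulVec_transpose]
  have hCS : u j ⬝ᵥ w ≤ Real.sqrt (u j ⬝ᵥ u j) * t := by
    have h1 : (u j ⬝ᵥ w)^2 ≤ (u j ⬝ᵥ u j) * (w ⬝ᵥ w) := by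
      have := Finset.sum_mul_sq_le_sq_mul_sq Finset.univ (u j) w
      simpa [dotProduct, sq, mul_comm] using this
    calc u j ⬝ᵥ w ≤ |u j ⬝ᵥ w| := le_abs_self _
      _ = Real.sqrt ((u j ⬝ᵥ w)^2) := (Real.sqrt_sq_eq_abs _).symm
      _ ≤ Real.sqrt ((u j ⬝ᵥ u j) * (w ⬝ᵥ w)) := Real.sqrt_le_sqrt h1
      _ = Real.sqrt (u j ⬝ᵥ u j) * t := Real.sqrt_mul
          (Finset.sum_nonneg fun k _ => mul_self_nonneg _) _
  have hcoer := hc w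
  have hneg : w ⬝ᵥ (-P22) *ᵥ w = -(w ⬝ᵥ P22 *ᵥ w) := by
    rw [neg_mulVec, dotProduct_neg]
  have hγj : γ j = c0 * (v ⬝ᵥ P11 *ᵥ v) := rfl
  have hβj : β j = c0 * Real.sqrt (u j ⬝ᵥ u j) := rfl
  -- t^2 ≤ γ j + 2 * β j * t
  have hquad : t^2 ≤ γ j + 2 * β j * t := by
    rw [hγj, hβj, ht2]
    rw [hneg] at hcoer
    have h3 : -(w ⬝ᵥ P22 *ᵥ w) ≤ v ⬝ᵥ P11 *ᵥ v + 2 * (u j ⬝ᵥ w) := by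
      rw [← hb]; linarith
    have h2 : w ⬝ᵥ w ≤ c0 * (v ⬝ᵥ P11 *ᵥ v + 2 * (u j ⬝ᵥ w)) :=
      le_trans hcoer (mul_le_mul_of_nonneg_left h3 hc0)
    have h4 : c0 * (u j ⬝ᵥ w) ≤ c0 * (Real.sqrt (u j ⬝ᵥ u j) * t) :=
      mul_le_mul_of_nonneg_left hCS hc0
    nlinarith [h2, h4]
  have hkey : t ≤ β j + Real.sqrt ((β j)^2 + γ j) := by
    have h5 : (t - β j)^2 ≤ (β j)^2 + γ j := by nlinarith [hquad]
    have h6 : t - β j ≤ Real.sqrt ((β j)^2 + γ j) := by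
      calc t - β j ≤ |t - β j| := le_abs_self _
        _ = Real.sqrt ((t - β j)^2) := (Real.sqrt_sq_eq_abs _).symm
        _ ≤ _ := Real.sqrt_le_sqrt h5
    linarith
  have h7 : (w i)^2 ≤ w ⬝ᵥ w := by
    have hws : w ⬝ᵥ w = ∑ k, (w k)^2 := by simp [dotProduct, sq]
    rw [hws]
    exact Finset.single_le_sum (f := fun k => (w k)^2) (fun k _ => sq_nonneg _)
      (Finset.mem_univ i)
  have hZij : |Z i j| ≤ t := by
    have hwi : Z i j = w i := by
      rw [hw, hv]
      simp [mulVec_single]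
    calc |Z i j| = Real.sqrt ((w i)^2) := by rw [hwi, Real.sqrt_sq_eq_abs]
      _ ≤ t := Real.sqrt_le_sqrt h7
  calc |Z i j| ≤ t := hZij
    _ ≤ β j + Real.sqrt ((β j)^2 + γ j) := hkey
    _ ≤ ∑ k, (β k + Real.sqrt ((β k)^2 + γ k)) :=
        Finset.single_le_sum (f := fun k => β k + Real.sqrt ((β k)^2 + γ k))
          (fun k _ => add_nonneg (hβnn k) (Real.sqrt_nonneg _))
          (Finset.mem_univ j)
end

section
/- Let Π ∈ 𝕊^{q+r} satisfy Π22 ≤ 0, Π11 − Π12 Π22† Π21 ≥ 0, ker Π22 ⊆ ker Π12, and let W ∈ ℝ^{q×p}. If W has full column rank, then { Z W : Z ∈ Z_r(Π) } = Z_r(Π_W), where Π_W = diag(Wᵀ, I_r) Π diag(W, I_r) and Z_r(M) = { Z ∈ ℝ^{r×·} : [I;Z]ᵀ M [I;Z] ≥ 0 }. -/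
open Matrix

section Helpers

lemma real_conjT {m n : ℕ} (A : Matrix (Fin m) (Fin n) ℝ) : Aᴴ = Aᵀ :=
  Matrix.conjTranspose_eq_transpose_of_trivial A

lemma psd_conj {n m : ℕ} {A : Matrix (Fin n) (Fin n) ℝ} (hA : A.PosSemidef)
    (B : Matrix (Fin n) (Fin m) ℝ) : (Bᵀ * A * B).PosSemidef := by
  simpa [real_conjT] using hA.conjTranspose_mul_mul_same B

lemma ker_helper {a b c : ℕ} {A : Matrix (Fin a) (Fin a) ℝ} {M : Matrix (Fin b) (Fin a) ℝ}
    (h : ∀ x, A.mulVec x = 0 → M.mulVec x = 0) {B : Matrix (Fin a) (Fin c) ℝ}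
    (hB : A * B = 0) : M * B = 0 := by
  ext i j
  have h1 : A.mulVec (fun k => B k j) = 0 := by
    funext i'
    have := congrFun (congrFun hB i') j
    simpa [Matrix.mul_apply, Matrix.mulVec, dotProduct] using this
  have := congrFun (h _ h1) i
  simpa [Matrix.mul_apply, Matrix.mulVec, dotProduct] using this

lemma mp_unique {n : ℕ} {A X Y : Matrix (Fin n) (Fin n) ℝ}
    (hX : IsMoorePenrose A X) (hY : IsMoorePenrose A Y) : X = Y := by
  obtain ⟨x1, x2, x3, x4⟩ := hX
  obtain ⟨y1, y2, y3, y4⟩ := hY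
  have hAX : A * X = A * Y := by
    calc A * X = A * Y * A * X := by rw [y1]
    _ = (A * Y) * (A * X) := by rw [Matrix.mul_assoc (A * Y)]
    _ = (A * Y)ᵀ * (A * X)ᵀ := by rw [y3, x3]
    _ = ((A * X) * (A * Y))ᵀ := by rw [← transpose_mul]
    _ = (A * Y)ᵀ := by rw [← Matrix.mul_assoc, x1]
    _ = A * Y := y3
  have hXA : X * A = Y * A := by
    calc X * A = (X * A) * (Y * A) := by
          rw [Matrix.mul_assoc X A, ← Matrix.mul_assoc A Y, y1]
    _ = (X * A)ᵀ * (Y * A)ᵀ := by rw [x4, y4]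
    _ = ((Y * A) * (X * A))ᵀ := by rw [← transpose_mul]
    _ = (Y * A)ᵀ := by rw [Matrix.mul_assoc Y A, ← Matrix.mul_assoc A X, x1]
    _ = Y * A := y4
  calc X = X * A * X := x2.symm
  _ = (Y * A) * X := by rw [hXA]
  _ = Y * (A * X) := Matrix.mul_assoc _ _ _
  _ = Y * (A * Y) := by rw [hAX]
  _ = Y * A * Y := (Matrix.mul_assoc _ _ _).symm
  _ = Y := y2

end Helpers

open scoped MatrixOrder in
lemma exists_sym_sqrt {n : ℕ} {A : Matrix (Fin n) (Fin n) ℝ} (hA : A.PosSemidef) :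
    ∃ R : Matrix (Fin n) (Fin n) ℝ, R * R = A ∧ R.PosSemidef :=
  ⟨CFC.sqrt A, CFC.sqrt_mul_sqrt_self A hA.nonneg, (CFC.sqrt_nonneg A).posSemidef⟩

lemma exists_pinv {n : ℕ} {A : Matrix (Fin n) (Fin n) ℝ} (hA : Aᵀ = A) :
    ∃ G : Matrix (Fin n) (Fin n) ℝ, Gᵀ = G ∧ A * G * A = A ∧ G * A * G = G := by
  have hH : A.IsHermitian := by
    rwa [Matrix.IsHermitian, Matrix.conjTranspose_eq_transpose_of_trivial]
  set V : Matrix (Fin n) (Fin n) ℝ := (hH.eigenvectorUnitary : Matrix (Fin n) (Fin n) ℝ) with hV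
  have hVV : star V * V = 1 := Matrix.mem_unitaryGroup_iff'.mp hH.eigenvectorUnitary.2
  set d : Fin n → ℝ := RCLike.ofReal ∘ hH.eigenvalues with hd
  have hspec : A = V * diagonal d * star V := hH.spectral_theorem
  have key : ∀ e f : Fin n → ℝ, (V * diagonal e * star V) * (V * diagonal f * star V)
      = V * diagonal (fun i => e i * f i) * star V := by
    intro e f
    calc (V * diagonal e * star V) * (V * diagonal f * star V)
        = V * (diagonal e * ((star V * V) * (diagonal f * star V))) := by
          simp only [Matrix.mul_assoc]
    _ = V * diagonal (fun i => e i * f i) * star V := by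
          rw [hVV, Matrix.one_mul, ← Matrix.mul_assoc (diagonal e), diagonal_mul_diagonal,
            ← Matrix.mul_assoc]
  have hstar : star V = Vᵀ := by
    rw [Matrix.star_eq_conjTranspose, Matrix.conjTranspose_eq_transpose_of_trivial]
  refine ⟨V * diagonal (fun i => (d i)⁻¹) * star V, ?_, ?_, ?_⟩
  · rw [hstar]
    simp only [Matrix.transpose_mul, Matrix.transpose_transpose, Matrix.diagonal_transpose,
      Matrix.mul_assoc]
  · rw [hspec, key, key]
    congr 1
    congr 1
    refine congrArg Matrix.diagonal (funext fun i => ?_)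
    rcases eq_or_ne (d i) 0 with h | h
    · simp [h]
    · field_simp
  · rw [hspec, key, key]
    congr 1
    congr 1
    refine congrArg Matrix.diagonal (funext fun i => ?_)
    rcases eq_or_ne (d i) 0 with h | h
    · simp [h]
    · field_simp
lemma dot_conj {a b : ℕ} (M : Matrix (Fin a) (Fin a) ℝ) (V : Matrix (Fin a) (Fin b) ℝ)
    (x : Fin b → ℝ) :
    x ⬝ᵥ ((Vᵀ * M * V) *ᵥ x) = (V *ᵥ x) ⬝ᵥ (M *ᵥ (V *ᵥ x)) := by
  rw [← Matrix.mulVec_mulVec, ← Matrix.mulVec_mulVec, Matrix.dotProduct_mulVec,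
    Matrix.vecMul_transpose]

lemma key_reverse {p q r : ℕ} {S : Matrix (Fin q) (Fin q) ℝ} {N : Matrix (Fin r) (Fin r) ℝ}
    {W : Matrix (Fin q) (Fin p) ℝ} {V : Matrix (Fin r) (Fin p) ℝ}
    (hS : S.PosSemidef) (hN : N.PosSemidef)
    (hY : ((Wᵀ * S * W) - Vᵀ * N * V).PosSemidef)
    (Wp : Matrix (Fin p) (Fin q) ℝ) (hWp : Wp * W = 1) :
    ∃ U : Matrix (Fin r) (Fin q) ℝ, U * W = V ∧ (S - Uᵀ * N * U).PosSemidef := by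
  have hSs : Sᵀ = S := by rw [← real_conjT]; exact hS.1
  have hNs : Nᵀ = N := by rw [← real_conjT]; exact hN.1
  have hAsym : (Wᵀ * S * W)ᵀ = Wᵀ * S * W := by
    simp only [transpose_mul, transpose_transpose, hSs, Matrix.mul_assoc]
  obtain ⟨G, hGs, hAGA, hGAG⟩ := exists_pinv hAsym
  obtain ⟨R, hRR, hRpsd⟩ := exists_sym_sqrt hN
  have hRs : Rᵀ = R := by rw [← real_conjT]; exact hRpsd.1
  obtain ⟨T, hTT, hTpsd⟩ := exists_sym_sqrt hS
  have hTs : Tᵀ = T := by rw [← real_conjT]; exact hTpsd.1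
  -- kernel property
  have hkerRV : ∀ x, (Wᵀ * S * W) *ᵥ x = 0 → (R * V) *ᵥ x = 0 := by
    intro x hx
    have q1 : (0:ℝ) ≤ x ⬝ᵥ ((Wᵀ * S * W - Vᵀ * N * V) *ᵥ x) := by simpa using hY.dotProduct_mulVec_nonneg x
    have q2 : (0:ℝ) ≤ x ⬝ᵥ ((Vᵀ * N * V) *ᵥ x) := by simpa using (psd_conj hN V).dotProduct_mulVec_nonneg x
    have q3 : x ⬝ᵥ ((Wᵀ * S * W) *ᵥ x) = 0 := by rw [hx, dotProduct_zero]
    have q4 : x ⬝ᵥ ((Vᵀ * N * V) *ᵥ x) = 0 := by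
      rw [Matrix.sub_mulVec, dotProduct_sub, q3] at q1; linarith
    rw [dot_conj] at q4
    have e := dot_conj (1 : Matrix (Fin r) (Fin r) ℝ) R (V *ᵥ x)
    rw [Matrix.mul_one, hRs, hRR, Matrix.one_mulVec] at e
    have q5 : (R *ᵥ (V *ᵥ x)) ⬝ᵥ (R *ᵥ (V *ᵥ x)) = 0 := by rw [← e]; exact q4
    have q6 : R *ᵥ (V *ᵥ x) = 0 := dotProduct_self_eq_zero.mp q5
    rw [← Matrix.mulVec_mulVec, q6]
  have hA0 : (Wᵀ * S * W) * (1 - G * (Wᵀ * S * W)) = 0 := by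
    rw [Matrix.mul_sub, Matrix.mul_one, ← Matrix.mul_assoc, hAGA, sub_self]
  have hRV : (R * V) * (1 - G * (Wᵀ * S * W)) = 0 := ker_helper hkerRV hA0
  -- the matrix U
  refine ⟨V * G * (Wᵀ * S) + V * (1 - G * (Wᵀ * S * W)) * Wp, ?_, ?_⟩
  · have e : (V * G * (Wᵀ * S) + V * (1 - G * (Wᵀ * S * W)) * Wp) * W
        = V * G * (Wᵀ * S * W) + V * ((1 - G * (Wᵀ * S * W)) * (Wp * W)) := by
      simp only [Matrix.add_mul, Matrix.mul_assoc]
    rw [e, hWp, Matrix.mul_one, Matrix.mul_sub, Matrix.mul_one]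
    simp only [Matrix.mul_assoc]
    abel
  · set U := V * G * (Wᵀ * S) + V * (1 - G * (Wᵀ * S * W)) * Wp with hUdef
    have hRU : R * U = (R * V) * (G * (Wᵀ * S)) := by
      rw [hUdef, Matrix.mul_add]
      have e1 : R * (V * (1 - G * (Wᵀ * S * W)) * Wp) = ((R * V) * (1 - G * (Wᵀ * S * W))) * Wp := by
        simp only [Matrix.mul_assoc]
      have e2 : R * (V * G * (Wᵀ * S)) = (R * V) * (G * (Wᵀ * S)) := by
        simp only [Matrix.mul_assoc]
      rw [e1, e2, hRV, Matrix.zero_mul, add_zero]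
    have hNU : Uᵀ * N * U = (G * (Wᵀ * S))ᵀ * (Vᵀ * N * V) * (G * (Wᵀ * S)) := by
      calc Uᵀ * N * U = (R * U)ᵀ * (R * U) := by
            rw [← hRR]
            simp only [transpose_mul, hRs, Matrix.mul_assoc]
      _ = ((R * V) * (G * (Wᵀ * S)))ᵀ * ((R * V) * (G * (Wᵀ * S))) := by rw [hRU]
      _ = (G * (Wᵀ * S))ᵀ * (Vᵀ * N * V) * (G * (Wᵀ * S)) := by
            rw [← hRR]
            simp only [transpose_mul, hRs, Matrix.mul_assoc]
    have hCt : (G * (Wᵀ * S))ᵀ = (S * W) * G := by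
      simp only [transpose_mul, transpose_transpose, hSs, hGs, Matrix.mul_assoc]
    have e3 : (G * (Wᵀ * S))ᵀ * (Wᵀ * S * W) * (G * (Wᵀ * S)) = (S * W) * (G * (Wᵀ * S)) := by
      rw [hCt]
      calc (S * W) * G * (Wᵀ * S * W) * (G * (Wᵀ * S))
          = (S * W) * ((G * (Wᵀ * S * W) * G) * (Wᵀ * S)) := by simp only [Matrix.mul_assoc]
      _ = (S * W) * (G * (Wᵀ * S)) := by rw [hGAG]
    have key : S - Uᵀ * N * U = (S - (S * W) * (G * (Wᵀ * S)))
        + (G * (Wᵀ * S))ᵀ * ((Wᵀ * S * W) - Vᵀ * N * V) * (G * (Wᵀ * S)) := by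
      rw [hNU, Matrix.mul_sub, Matrix.sub_mul, e3]
      abel
    rw [key]
    have part2 : ((G * (Wᵀ * S))ᵀ * ((Wᵀ * S * W) - Vᵀ * N * V) * (G * (Wᵀ * S))).PosSemidef :=
      psd_conj hY _
    -- part 1
    set P := (T * W) * G * (T * W)ᵀ with hPdef
    have hBB : (T * W)ᵀ * (T * W) = Wᵀ * S * W := by
      calc (T * W)ᵀ * (T * W) = Wᵀ * ((T * T) * W) := by
            simp only [transpose_mul, hTs, Matrix.mul_assoc]
      _ = Wᵀ * S * W := by rw [hTT, Matrix.mul_assoc]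
    have hPP : P * P = P := by
      rw [hPdef]
      calc ((T * W) * G * (T * W)ᵀ) * ((T * W) * G * (T * W)ᵀ)
          = (T * W) * ((G * ((T * W)ᵀ * (T * W))) * (G * (T * W)ᵀ)) := by
            simp only [Matrix.mul_assoc]
      _ = (T * W) * ((G * (Wᵀ * S * W)) * (G * (T * W)ᵀ)) := by rw [hBB]
      _ = (T * W) * (((G * (Wᵀ * S * W)) * G) * (T * W)ᵀ) := by simp only [Matrix.mul_assoc]
      _ = (T * W) * G * (T * W)ᵀ := by rw [hGAG]; simp only [Matrix.mul_assoc]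
    have hPs : Pᵀ = P := by
      rw [hPdef]
      simp only [transpose_mul, transpose_transpose, hGs, Matrix.mul_assoc]
    have hIP : ((1 : Matrix (Fin q) (Fin q) ℝ) - P).PosSemidef := by
      have h := posSemidef_conjTranspose_mul_self ((1 : Matrix (Fin q) (Fin q) ℝ) - P)
      rw [real_conjT] at h
      have e : ((1 : Matrix (Fin q) (Fin q) ℝ) - P)ᵀ * ((1 : Matrix (Fin q) (Fin q) ℝ) - P)
          = 1 - P := by
        rw [transpose_sub, transpose_one, hPs]
        simp only [Matrix.sub_mul, Matrix.mul_sub, Matrix.mul_one, Matrix.one_mul]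
        rw [hPP]
        abel
      rwa [e] at h
    have e5 : T * P * T = (S * W) * (G * (Wᵀ * S)) := by
      rw [hPdef, ← hTT]
      simp only [transpose_mul, hTs, Matrix.mul_assoc]
    have e4 : Tᵀ * (1 - P) * T = S - (S * W) * (G * (Wᵀ * S)) := by
      rw [hTs, Matrix.mul_sub, Matrix.mul_one, Matrix.sub_mul, hTT, e5]
    have part1 : (S - (S * W) * (G * (Wᵀ * S))).PosSemidef := by
      rw [← e4]; exact psd_conj hIP T
    exact part1.add part2

lemma quad_decomp {q r : ℕ} (P11 : Matrix (Fin q) (Fin q) ℝ) (P12 : Matrix (Fin q) (Fin r) ℝ)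
    (P22 X : Matrix (Fin r) (Fin r) ℝ)
    (h1 : P12 * X * P22 = P12) (h2 : P22 * X * P12ᵀ = P12ᵀ) (h3 : X * P22 * X = X)
    (hXs : Xᵀ = X) (Z : Matrix (Fin r) (Fin q) ℝ) :
    (fromRows (1 : Matrix (Fin q) (Fin q) ℝ) Z)ᵀ * fromBlocks P11 P12 P12ᵀ P22 *
        fromRows (1 : Matrix (Fin q) (Fin q) ℝ) Z
      = (P11 - P12 * X * P12ᵀ) + (Z + X * P12ᵀ)ᵀ * P22 * (Z + X * P12ᵀ) := by
  rw [Matrix.mul_assoc, fromBlocks_mul_fromRows, transpose_fromRows, fromCols_mul_fromRows]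
  have e1 : (Z + X * P12ᵀ)ᵀ * P22 * (Z + X * P12ᵀ)
      = Zᵀ * P22 * Z + Zᵀ * (P22 * X * P12ᵀ) + (P12 * X * P22) * Z
        + P12 * (X * P22 * X) * P12ᵀ := by
    rw [transpose_add, transpose_mul, hXs, transpose_transpose]
    simp only [Matrix.add_mul, Matrix.mul_add, Matrix.mul_assoc]
    abel
  rw [e1, h1, h2, h3]
  simp only [transpose_one, Matrix.one_mul, Matrix.mul_one]
  simp only [Matrix.add_mul, Matrix.mul_add, Matrix.mul_assoc, sub_eq_add_neg]
  abel

theorem stmt5 {q r p : ℕ}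
    (P11 : Matrix (Fin q) (Fin q) ℝ) (P12 : Matrix (Fin q) (Fin r) ℝ)
    (P22 X : Matrix (Fin r) (Fin r) ℝ) (W : Matrix (Fin q) (Fin p) ℝ)
    (h11 : P11.IsSymm) (h22 : P22.IsSymm)
    (hX : IsMoorePenrose P22 X)
    (h22neg : (-P22).PosSemidef)
    (hSchur : (P11 - P12 * X * P12ᵀ).PosSemidef)
    (hker : ∀ x : Fin r → ℝ, P22.mulVec x = 0 → P12.mulVec x = 0)
    (hW : W.rank = p) :
    (fun Z : Matrix (Fin r) (Fin q) ℝ => Z * W) '' Zset (fromBlocks P11 P12 P12ᵀ P22)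
      = Zset (fromBlocks (Wᵀ * P11 * W) (Wᵀ * P12) (P12ᵀ * W) P22) := by
  have h22' : P22ᵀ = P22 := h22
  have h11' : P11ᵀ = P11 := h11
  obtain ⟨x1, x2, x3, x4⟩ := hX
  -- X is symmetric
  have hXs : Xᵀ = X := by
    refine mp_unique (A := P22) ⟨?_, ?_, ?_, ?_⟩ ⟨x1, x2, x3, x4⟩
    · have := congrArg transpose x1
      simpa [transpose_mul, h22', Matrix.mul_assoc] using this
    · have := congrArg transpose x2
      simpa [transpose_mul, h22', Matrix.mul_assoc] using this
    · calc (P22 * Xᵀ)ᵀ = X * P22 := by simp [transpose_mul, h22']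
      _ = (X * P22)ᵀ := x4.symm
      _ = P22 * Xᵀ := by simp [transpose_mul, h22']
    · calc (Xᵀ * P22)ᵀ = P22 * X := by simp [transpose_mul, h22']
      _ = (P22 * X)ᵀ := x3.symm
      _ = Xᵀ * P22 := by simp [transpose_mul, h22']
  -- kernel identities
  have h1 : P12 * X * P22 = P12 := by
    have hB : P22 * (1 - X * P22) = 0 := by
      rw [Matrix.mul_sub, Matrix.mul_one, ← Matrix.mul_assoc, x1, sub_self]
    have h := ker_helper hker hB
    rw [Matrix.mul_sub, Matrix.mul_one, sub_eq_zero, ← Matrix.mul_assoc] at h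
    exact h.symm
  have h2 : P22 * X * P12ᵀ = P12ᵀ := by
    have := congrArg transpose h1
    simpa [transpose_mul, h22', hXs, Matrix.mul_assoc] using this
  have hSsym : (P11 - P12 * X * P12ᵀ)ᵀ = P11 - P12 * X * P12ᵀ := by
    simp [transpose_sub, transpose_mul, h11', hXs, Matrix.mul_assoc]
  ext Y
  simp only [Set.mem_image, Zset, Set.mem_setOf_eq]
  constructor
  · rintro ⟨Z, hZ, rfl⟩
    have hD : (fromBlocks W (0 : Matrix (Fin q) (Fin r) ℝ) (0 : Matrix (Fin r) (Fin p) ℝ)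
          (1 : Matrix (Fin r) (Fin r) ℝ)) * fromRows (1 : Matrix (Fin p) (Fin p) ℝ) (Z * W)
        = fromRows (1 : Matrix (Fin q) (Fin q) ℝ) Z * W := by
      simp [fromBlocks_mul_fromRows, fromRows_mul]
    have hPiW : fromBlocks (Wᵀ * P11 * W) (Wᵀ * P12) (P12ᵀ * W) P22
        = (fromBlocks W (0 : Matrix (Fin q) (Fin r) ℝ) (0 : Matrix (Fin r) (Fin p) ℝ)
            (1 : Matrix (Fin r) (Fin r) ℝ))ᵀ * fromBlocks P11 P12 P12ᵀ P22 *
          fromBlocks W (0 : Matrix (Fin q) (Fin r) ℝ) 0 (1 : Matrix (Fin r) (Fin r) ℝ) := by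
      simp [fromBlocks_transpose, fromBlocks_multiply, Matrix.mul_assoc]
    rw [hPiW]
    have e : (fromRows (1 : Matrix (Fin p) (Fin p) ℝ) (Z * W))ᵀ *
          ((fromBlocks W 0 0 (1 : Matrix (Fin r) (Fin r) ℝ))ᵀ * fromBlocks P11 P12 P12ᵀ P22 *
            fromBlocks W 0 0 (1 : Matrix (Fin r) (Fin r) ℝ)) * fromRows (1 : Matrix (Fin p) (Fin p) ℝ) (Z * W)
        = Wᵀ * ((fromRows (1 : Matrix (Fin q) (Fin q) ℝ) Z)ᵀ * fromBlocks P11 P12 P12ᵀ P22 *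
            fromRows (1 : Matrix (Fin q) (Fin q) ℝ) Z) * W := by
      calc (fromRows (1 : Matrix (Fin p) (Fin p) ℝ) (Z * W))ᵀ *
          ((fromBlocks W 0 0 (1 : Matrix (Fin r) (Fin r) ℝ))ᵀ * fromBlocks P11 P12 P12ᵀ P22 *
            fromBlocks W 0 0 (1 : Matrix (Fin r) (Fin r) ℝ)) * fromRows (1 : Matrix (Fin p) (Fin p) ℝ) (Z * W)
          = (fromBlocks W 0 0 (1 : Matrix (Fin r) (Fin r) ℝ) *
              fromRows (1 : Matrix (Fin p) (Fin p) ℝ) (Z * W))ᵀ * fromBlocks P11 P12 P12ᵀ P22 *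
              (fromBlocks W 0 0 (1 : Matrix (Fin r) (Fin r) ℝ) * fromRows (1 : Matrix (Fin p) (Fin p) ℝ) (Z * W)) := by
            simp only [transpose_mul, Matrix.mul_assoc]
      _ = (fromRows (1 : Matrix (Fin q) (Fin q) ℝ) Z * W)ᵀ * fromBlocks P11 P12 P12ᵀ P22 *
              (fromRows (1 : Matrix (Fin q) (Fin q) ℝ) Z * W) := by rw [hD]
      _ = Wᵀ * ((fromRows (1 : Matrix (Fin q) (Fin q) ℝ) Z)ᵀ * fromBlocks P11 P12 P12ᵀ P22 *
            fromRows (1 : Matrix (Fin q) (Fin q) ℝ) Z) * W := by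
            simp only [transpose_mul, Matrix.mul_assoc]
    rw [e]
    exact psd_conj hZ W
  · intro hY
    -- rewrite the membership via the quadratic decomposition
    have hQ : P12ᵀ * W = (Wᵀ * P12)ᵀ := by rw [transpose_mul, transpose_transpose]
    have h1W : (Wᵀ * P12) * X * P22 = Wᵀ * P12 := by
      calc (Wᵀ * P12) * X * P22 = Wᵀ * (P12 * X * P22) := by simp only [Matrix.mul_assoc]
      _ = Wᵀ * P12 := by rw [h1]
    have h2W : P22 * X * (Wᵀ * P12)ᵀ = (Wᵀ * P12)ᵀ := by
      rw [← hQ]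
      calc P22 * X * (P12ᵀ * W) = (P22 * X * P12ᵀ) * W := by simp only [Matrix.mul_assoc]
      _ = P12ᵀ * W := by rw [h2]
    rw [hQ, quad_decomp _ _ _ _ h1W h2W x2 hXs] at hY
    rw [← hQ] at hY
    have hSW : Wᵀ * P11 * W - (Wᵀ * P12) * X * (P12ᵀ * W)
        = Wᵀ * (P11 - P12 * X * P12ᵀ) * W := by
      simp only [Matrix.mul_sub, Matrix.sub_mul, Matrix.mul_assoc]
    rw [hSW] at hY
    -- left inverse of W
    have hWinj : ∀ v : Fin p → ℝ, W *ᵥ v = 0 → v = 0 := by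
      have hrank : Module.finrank ℝ (LinearMap.range W.mulVecLin) = p := hW
      have hadd := LinearMap.finrank_range_add_finrank_ker W.mulVecLin
      rw [hrank] at hadd
      have hfin : Module.finrank ℝ (Fin p → ℝ) = p := by simp
      have hker0 : Module.finrank ℝ (LinearMap.ker W.mulVecLin) = 0 := by omega
      have hbot : LinearMap.ker W.mulVecLin = ⊥ := Submodule.finrank_eq_zero.mp hker0
      intro v hv
      have hmem : v ∈ LinearMap.ker W.mulVecLin := by
        simpa [Matrix.mulVecLin_apply] using hv
      rw [hbot] at hmem
      simpa using hmem
    have hWWpd : (Wᵀ * W).PosDef := by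
      refine .of_dotProduct_mulVec_pos (by simpa using isHermitian_conjTranspose_mul_self W) fun v hv => ?_
      have h0 : W *ᵥ v ≠ 0 := fun h => hv (hWinj v h)
      have hnn : 0 ≤ (W *ᵥ v) ⬝ᵥ (W *ᵥ v) :=
        Finset.sum_nonneg fun i _ => mul_self_nonneg _
      have hne : (W *ᵥ v) ⬝ᵥ (W *ᵥ v) ≠ 0 := fun h => h0 (dotProduct_self_eq_zero.mp h)
      have hpos : 0 < (W *ᵥ v) ⬝ᵥ (W *ᵥ v) := lt_of_le_of_ne hnn (Ne.symm hne)
      have e : star v ⬝ᵥ (Wᵀ * W) *ᵥ v = (W *ᵥ v) ⬝ᵥ (W *ᵥ v) := by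
        rw [star_trivial, ← Matrix.mulVec_mulVec, Matrix.dotProduct_mulVec,
          Matrix.vecMul_transpose]
      rw [e]
      exact hpos
    have hWleft : ((Wᵀ * W)⁻¹ * Wᵀ) * W = 1 := by
      rw [Matrix.mul_assoc,
        Matrix.nonsing_inv_mul _ ((Matrix.isUnit_iff_isUnit_det _).mp hWWpd.isUnit)]
    -- apply the key lemma
    have hYkey : ((Wᵀ * (P11 - P12 * X * P12ᵀ) * W)
        - (Y + X * (P12ᵀ * W))ᵀ * (-P22) * (Y + X * (P12ᵀ * W))).PosSemidef := by
      have e : (Y + X * (P12ᵀ * W))ᵀ * (-P22) * (Y + X * (P12ᵀ * W))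
          = -((Y + X * (P12ᵀ * W))ᵀ * P22 * (Y + X * (P12ᵀ * W))) := by
        rw [Matrix.mul_neg, Matrix.neg_mul]
      rw [e, sub_neg_eq_add]
      exact hY
    obtain ⟨U, hUW, hUpsd⟩ := key_reverse hSchur h22neg hYkey _ hWleft
    refine ⟨U - X * P12ᵀ, ?_, ?_⟩
    · rw [quad_decomp _ _ _ _ h1 h2 x2 hXs]
      have e : U - X * P12ᵀ + X * P12ᵀ = U := sub_add_cancel _ _
      rw [e]
      have e2 : Uᵀ * P22 * U = -(Uᵀ * (-P22) * U) := by
        rw [Matrix.mul_neg, Matrix.neg_mul, neg_neg]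
      rw [e2, ← sub_eq_add_neg]
      exact hUpsd
    · rw [Matrix.sub_mul, hUW, Matrix.mul_assoc]
      exact add_sub_cancel_right _ _
end

section
/- (Dualization of the dissipation LMI) Let P ∈ 𝕊^n with P > 0, let A ∈ ℝ^{n×n}, B ∈ ℝ^{n×m}, C ∈ ℝ^{p×n}, D ∈ ℝ^{p×m}, and let S ∈ 𝕊^{m+p} be invertible with inertia (p, 0, m). Define Q = P⁻¹ and Ŝ = [0, −I_p; I_m, 0] S⁻¹ [0, −I_m; I_p, 0]. Then [I, 0; A, B]ᵀ [P, 0; 0, −P] [I, 0; A, B] + [0, I; C, D]ᵀ S [0, I; C, D] ≥ 0 if and only if [I, 0; Aᵀ, Cᵀ]ᵀ [Q, 0; 0, −Q] [I, 0; Aᵀ, Cᵀ] + [0, I; Bᵀ, Dᵀ]ᵀ Ŝ [0, I; Bᵀ, Dᵀ] ≥ 0. -/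
open Matrix

open Classical in
/-- Number of negative eigenvalues (with multiplicity) of a real symmetric matrix. -/
noncomputable def inertiaNeg {n : Type*} [Fintype n] [DecidableEq n]
    {A : Matrix n n ℝ} (hA : A.IsHermitian) : ℕ :=
  (Finset.univ.filter fun i => hA.eigenvalues i < 0).card

open Classical in
/-- Number of zero eigenvalues (with multiplicity) of a real symmetric matrix. -/
noncomputable def inertiaZero {n : Type*} [Fintype n] [DecidableEq n]
    {A : Matrix n n ℝ} (hA : A.IsHermitian) : ℕ :=
  (Finset.univ.filter fun i => hA.eigenvalues i = 0).card

open Classical in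
/-- Number of positive eigenvalues (with multiplicity) of a real symmetric matrix. -/
noncomputable def inertiaPos {n : Type*} [Fintype n] [DecidableEq n]
    {A : Matrix n n ℝ} (hA : A.IsHermitian) : ℕ :=
  (Finset.univ.filter fun i => 0 < hA.eigenvalues i).card

section Helpers

set_option linter.unusedSectionVars false

variable {ι : Type*} [Fintype ι] [DecidableEq ι]

private lemma dot_sum_left' {κ : Type*} [Fintype κ] (f : κ → ι → ℝ) (w : ι → ℝ) :
    (∑ i, f i) ⬝ᵥ w = ∑ i, f i ⬝ᵥ w := by
  simp only [dotProduct, Finset.sum_apply, Finset.sum_mul]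
  exact Finset.sum_comm

private lemma dot_sum_right' {κ : Type*} [Fintype κ] (w : ι → ℝ) (f : κ → ι → ℝ) :
    w ⬝ᵥ (∑ i, f i) = ∑ i, w ⬝ᵥ f i := by
  simp only [dotProduct, Finset.sum_apply, Finset.mul_sum]
  exact Finset.sum_comm

private lemma mulVec_sum' {κ : Type*} [Fintype κ] (M : Matrix ι ι ℝ) (f : κ → ι → ℝ) :
    M *ᵥ (∑ i, f i) = ∑ i, M *ᵥ f i :=
  map_sum (Matrix.mulVecLin M) f Finset.univ

private lemma exists_negdef_subspace {κ : Type*} [Fintype κ] [DecidableEq κ]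
    (v : κ → ι → ℝ) (horth : ∀ i j, v i ⬝ᵥ v j = if i = j then (1:ℝ) else 0)
    (M : Matrix ι ι ℝ) (μ : κ → ℝ) (heig : ∀ i, M *ᵥ v i = μ i • v i) (hμ : ∀ i, μ i < 0) :
    ∃ W : Submodule ℝ (ι → ℝ), Module.finrank ℝ W = Fintype.card κ ∧
      ∀ x ∈ W, x ≠ 0 → x ⬝ᵥ M *ᵥ x < 0 := by
  let L : (κ → ℝ) →ₗ[ℝ] (ι → ℝ) :=
    { toFun := fun c => ∑ i, c i • v i
      map_add' := fun a b => by simp [add_smul, Finset.sum_add_distrib]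
      map_smul' := fun r a => by simp [smul_smul, Finset.smul_sum] }
  have hdot : ∀ (c : κ → ℝ) (j : κ), (∑ i, c i • v i) ⬝ᵥ v j = c j := by
    intro c j
    rw [dot_sum_left']
    simp [smul_dotProduct, horth]
  have hinj : Function.Injective L := by
    intro a b hab
    funext j
    have h1 := hdot a j
    rw [show (∑ i, a i • v i) = ∑ i, b i • v i from hab, hdot] at h1
    exact h1.symm
  refine ⟨LinearMap.range L, ?_, ?_⟩
  · rw [LinearMap.finrank_range_of_inj hinj, Module.finrank_fintype_fun_eq_card]
  · rintro x ⟨c, rfl⟩ hne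
    have hcne : c ≠ 0 := fun h => hne (by rw [h, map_zero])
    obtain ⟨j, hj⟩ := Function.ne_iff.mp hcne
    have hx : (L c : ι → ℝ) = ∑ i, c i • v i := rfl
    have hMv : M *ᵥ (L c : ι → ℝ) = ∑ i, (c i * μ i) • v i := by
      rw [hx, mulVec_sum']
      refine Finset.sum_congr rfl fun i _ => ?_
      rw [Matrix.mulVec_smul, heig, smul_smul]
    have hform : (L c : ι → ℝ) ⬝ᵥ M *ᵥ (L c : ι → ℝ) = ∑ i, μ i * c i ^ 2 := by
      rw [hMv, dot_sum_right']
      refine Finset.sum_congr rfl fun i _ => ?_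
      rw [dotProduct_smul, hx, hdot, smul_eq_mul]
      ring
    rw [hform]
    have hlt : ∑ i, μ i * c i ^ 2 < ∑ _i : κ, (0:ℝ) := by
      refine Finset.sum_lt_sum (fun i _ => by nlinarith [hμ i, sq_nonneg (c i)]) ?_
      refine ⟨j, Finset.mem_univ j, ?_⟩
      have h2 : 0 < c j ^ 2 := lt_of_le_of_ne (sq_nonneg _) (Ne.symm (pow_ne_zero 2 hj))
      nlinarith [hμ j]
    simpa using hlt

private lemma key_lemma (M : Matrix ι ι ℝ) (hM : M.IsHermitian) (hdet : IsUnit M.det)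
    (U W : Submodule ℝ (ι → ℝ))
    (hdim : Module.finrank ℝ U + Module.finrank ℝ W = Fintype.card ι)
    (hW : ∀ w ∈ W, w ≠ 0 → w ⬝ᵥ M *ᵥ w < 0)
    (hU : ∀ u ∈ U, 0 ≤ u ⬝ᵥ M *ᵥ u)
    (v : ι → ℝ) (hv : ∀ u ∈ U, v ⬝ᵥ u = 0) :
    v ⬝ᵥ M⁻¹ *ᵥ v ≤ 0 := by
  by_contra hcon
  push_neg at hcon
  set z := M⁻¹ *ᵥ v with hz
  have hMz : M *ᵥ z = v := by
    rw [hz, Matrix.mulVec_mulVec, Matrix.mul_nonsing_inv _ hdet, Matrix.one_mulVec]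
  have hsymm : Mᵀ = M := by
    rw [← Matrix.conjTranspose_eq_transpose_of_trivial]; exact hM
  by_cases hzU : z ∈ U
  · exact absurd (hv z hzU) (ne_of_gt hcon)
  · have hzne : z ≠ 0 := by
      intro h
      rw [show v ⬝ᵥ M⁻¹ *ᵥ v = v ⬝ᵥ z from rfl, h, dotProduct_zero] at hcon
      exact lt_irrefl _ hcon
    have hbot : U ⊓ (ℝ ∙ z) = ⊥ := by
      rw [Submodule.eq_bot_iff]
      rintro y ⟨hyU, hyz⟩
      obtain ⟨t, rfl⟩ := Submodule.mem_span_singleton.mp hyz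
      rcases eq_or_ne t 0 with rfl | ht
      · simp
      · exact absurd ((Submodule.smul_mem_iff U ht).mp hyU) hzU
    have hU' : Module.finrank ℝ ↥(U ⊔ (ℝ ∙ z)) = Module.finrank ℝ U + 1 := by
      have h := Submodule.finrank_sup_add_finrank_inf_eq U (ℝ ∙ z)
      rw [hbot, finrank_bot, finrank_span_singleton hzne] at h
      omega
    have hne_bot : (U ⊔ (ℝ ∙ z)) ⊓ W ≠ ⊥ := by
      intro hb
      have h := Submodule.finrank_sup_add_finrank_inf_eq (U ⊔ (ℝ ∙ z)) W
      rw [hb, finrank_bot, hU'] at h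
      have hle : Module.finrank ℝ ↥((U ⊔ (ℝ ∙ z)) ⊔ W) ≤ Fintype.card ι := by
        have h2 := Submodule.finrank_le ((U ⊔ (ℝ ∙ z)) ⊔ W)
        rwa [Module.finrank_fintype_fun_eq_card] at h2
      omega
    obtain ⟨x, hxmem, hxne⟩ := Submodule.exists_mem_ne_zero_of_ne_bot hne_bot
    obtain ⟨hxU', hxW⟩ := hxmem
    obtain ⟨u, huU, y, hy, rfl⟩ := Submodule.mem_sup.mp hxU'
    obtain ⟨t, rfl⟩ := Submodule.mem_span_singleton.mp hy
    have h1 : u ⬝ᵥ M *ᵥ z = 0 := by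
      rw [hMz, dotProduct_comm]; exact hv u huU
    have h2 : z ⬝ᵥ M *ᵥ u = 0 := by
      rw [Matrix.dotProduct_mulVec, show z ᵥ* M = M *ᵥ z by
        conv_lhs => rw [← hsymm]
        rw [Matrix.vecMul_transpose], hMz]
      exact hv u huU
    have h3 : z ⬝ᵥ M *ᵥ z = v ⬝ᵥ z := by rw [hMz, dotProduct_comm]
    have hform : (u + t • z) ⬝ᵥ M *ᵥ (u + t • z) = u ⬝ᵥ M *ᵥ u + t ^ 2 * (v ⬝ᵥ z) := by
      simp only [Matrix.mulVec_add, Matrix.mulVec_smul, add_dotProduct,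
        dotProduct_add, smul_dotProduct, dotProduct_smul,
        smul_eq_mul, h1, h2, h3]
      ring
    have hge : 0 ≤ (u + t • z) ⬝ᵥ M *ᵥ (u + t • z) := by
      rw [hform]
      have hvz : 0 < v ⬝ᵥ z := hcon
      nlinarith [hU u huU, sq_nonneg t]
    exact absurd (hW _ hxW hxne) (not_lt.mpr hge)

private lemma dot_sandwich {a b : Type*} [Fintype a] [Fintype b]
    (X : Matrix a b ℝ) (M : Matrix a a ℝ) (z : b → ℝ) :
    z ⬝ᵥ ((Xᵀ * M * X) *ᵥ z) = (X *ᵥ z) ⬝ᵥ (M *ᵥ (X *ᵥ z)) := by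
  rw [← Matrix.mulVec_mulVec, ← Matrix.mulVec_mulVec, Matrix.dotProduct_mulVec,
    Matrix.vecMul_transpose]

private lemma isHermitian_fromBlocks_diag {a b : Type*} [Fintype a] [Fintype b]
    {A : Matrix a a ℝ} {D : Matrix b b ℝ} (hA : A.IsHermitian) (hD : D.IsHermitian) :
    (fromBlocks A 0 0 D).IsHermitian :=
  Matrix.IsHermitian.fromBlocks hA (Matrix.conjTranspose_zero) hD

private lemma twist_form {m p : Type*} [Fintype m] [Fintype p] [DecidableEq m] [DecidableEq p] (R : Matrix (m ⊕ p) (m ⊕ p) ℝ)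
    (y₁ : p → ℝ) (y₂ : m → ℝ) :
    (Sum.elim y₁ y₂) ⬝ᵥ (((fromBlocks 0 (-1) 1 0 : Matrix (p ⊕ m) (m ⊕ p) ℝ) * R *
        (fromBlocks 0 (-1) 1 0 : Matrix (m ⊕ p) (p ⊕ m) ℝ)) *ᵥ (Sum.elim y₁ y₂)) =
      -(Sum.elim (-y₂) y₁ ⬝ᵥ (R *ᵥ Sum.elim (-y₂) y₁)) := by
  rw [← Matrix.mulVec_mulVec, ← Matrix.mulVec_mulVec]
  rw [show (fromBlocks 0 (-1) 1 0 : Matrix (m ⊕ p) (p ⊕ m) ℝ) *ᵥ (Sum.elim y₁ y₂)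
      = Sum.elim (-y₂) y₁ by
    rw [Matrix.fromBlocks_mulVec]
    simp [Matrix.neg_mulVec]]
  rw [Matrix.dotProduct_mulVec]
  rw [show (Sum.elim y₁ y₂) ᵥ* (fromBlocks 0 (-1) 1 0 : Matrix (p ⊕ m) (m ⊕ p) ℝ)
      = -(Sum.elim (-y₂) y₁) by
    rw [← Matrix.mulVec_transpose, Matrix.fromBlocks_transpose, Matrix.fromBlocks_mulVec]
    funext i
    rcases i with i | i <;> simp [Matrix.neg_mulVec]]
  rw [neg_dotProduct]

end Helpers

theorem stmt9 {n m p : ℕ}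
    (P : Matrix (Fin n) (Fin n) ℝ) (hP : P.PosDef)
    (A : Matrix (Fin n) (Fin n) ℝ) (B : Matrix (Fin n) (Fin m) ℝ)
    (C : Matrix (Fin p) (Fin n) ℝ) (D : Matrix (Fin p) (Fin m) ℝ)
    (S : Matrix (Fin m ⊕ Fin p) (Fin m ⊕ Fin p) ℝ) (hS : S.IsHermitian)
    (hSinv : IsUnit S)
    (hSneg : inertiaNeg hS = p) (hSzero : inertiaZero hS = 0) (hSpos : inertiaPos hS = m) :
    ((fromBlocks 1 0 A B : Matrix (Fin n ⊕ Fin n) (Fin n ⊕ Fin m) ℝ)ᵀ * fromBlocks P 0 0 (-P) * (fromBlocks 1 0 A B : Matrix (Fin n ⊕ Fin n) (Fin n ⊕ Fin m) ℝ) +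
        (fromBlocks 0 1 C D : Matrix (Fin m ⊕ Fin p) (Fin n ⊕ Fin m) ℝ)ᵀ * S * (fromBlocks 0 1 C D : Matrix (Fin m ⊕ Fin p) (Fin n ⊕ Fin m) ℝ)).PosSemidef
      ↔
    ((fromBlocks 1 0 Aᵀ Cᵀ : Matrix (Fin n ⊕ Fin n) (Fin n ⊕ Fin p) ℝ)ᵀ * fromBlocks P⁻¹ 0 0 (-P⁻¹) * (fromBlocks 1 0 Aᵀ Cᵀ : Matrix (Fin n ⊕ Fin n) (Fin n ⊕ Fin p) ℝ) +
        (fromBlocks 0 1 Bᵀ Dᵀ : Matrix (Fin p ⊕ Fin m) (Fin n ⊕ Fin p) ℝ)ᵀ *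
          ((fromBlocks 0 (-1) 1 0 : Matrix (Fin p ⊕ Fin m) (Fin m ⊕ Fin p) ℝ) * S⁻¹ *
            (fromBlocks 0 (-1) 1 0 : Matrix (Fin m ⊕ Fin p) (Fin p ⊕ Fin m) ℝ)) *
          fromBlocks 0 1 Bᵀ Dᵀ).PosSemidef := by
  -- basic facts
  have hPdet : IsUnit P.det := isUnit_iff_ne_zero.mpr (ne_of_gt hP.det_pos)
  have hSdet : IsUnit S.det := (Matrix.isUnit_iff_isUnit_det S).mp hSinv
  have hPH : P.IsHermitian := hP.1
  have hPiH : (P⁻¹).IsHermitian := hPH.inv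
  have hSiH : (S⁻¹).IsHermitian := hS.inv
  -- the big block matrices
  set Mbig : Matrix (Fin n ⊕ (Fin n ⊕ (Fin m ⊕ Fin p))) (Fin n ⊕ (Fin n ⊕ (Fin m ⊕ Fin p))) ℝ :=
    fromBlocks P 0 0 (fromBlocks (-P) 0 0 S) with hMbig
  set Nbig : Matrix (Fin n ⊕ (Fin n ⊕ (Fin m ⊕ Fin p))) (Fin n ⊕ (Fin n ⊕ (Fin m ⊕ Fin p))) ℝ :=
    fromBlocks P⁻¹ 0 0 (fromBlocks (-P⁻¹) 0 0 S⁻¹) with hNbig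
  have hMbigHerm : Mbig.IsHermitian :=
    isHermitian_fromBlocks_diag hPH (isHermitian_fromBlocks_diag hPH.neg hS)
  have hNbigHerm : Nbig.IsHermitian :=
    isHermitian_fromBlocks_diag hPiH (isHermitian_fromBlocks_diag hPiH.neg hSiH)
  have hMN : Mbig * Nbig = 1 := by
    rw [hMbig, hNbig]
    simp only [Matrix.fromBlocks_multiply, Matrix.mul_zero, Matrix.zero_mul, Matrix.mul_neg,
      Matrix.neg_mul, neg_neg, add_zero, zero_add, Matrix.mul_nonsing_inv _ hPdet,
      Matrix.mul_nonsing_inv _ hSdet, neg_zero, Matrix.fromBlocks_one]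
  have hNM : Nbig * Mbig = 1 := mul_eq_one_comm.mp hMN
  have hMdet : IsUnit Mbig.det := Matrix.isUnit_det_of_right_inverse hMN
  have hMinv : Mbig⁻¹ = Nbig := Matrix.inv_eq_right_inv hMN
  have hnegN_mul : (-Nbig) * (-Mbig) = 1 := by
    rw [Matrix.neg_mul, Matrix.mul_neg, neg_neg, hNM]
  have hnegNdet : IsUnit (-Nbig).det := Matrix.isUnit_det_of_right_inverse hnegN_mul
  have hnegNinv : (-Nbig)⁻¹ = -Mbig := Matrix.inv_eq_right_inv hnegN_mul
  have hnegNHerm : (-Nbig).IsHermitian := hNbigHerm.neg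
  -- eigen data for S
  set vS : (Fin m ⊕ Fin p) → (Fin m ⊕ Fin p) → ℝ := fun i => ⇑(hS.eigenvectorBasis i) with hvS
  have horthS : ∀ i j, vS i ⬝ᵥ vS j = if i = j then (1:ℝ) else 0 := by
    intro i j
    have h := orthonormal_iff_ite.mp hS.eigenvectorBasis.orthonormal i j
    rw [EuclideanSpace.inner_eq_star_dotProduct, dotProduct_comm] at h
    simpa [dotProduct, hvS] using h
  have heigS : ∀ i, S *ᵥ vS i = hS.eigenvalues i • vS i := fun i =>
    hS.mulVec_eigenvectorBasis i
  have hSd0 : ∀ i, hS.eigenvalues i ≠ 0 := by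
    intro i h
    have h0 := hSzero
    unfold inertiaZero at h0
    rw [Finset.card_eq_zero] at h0
    have hmem : i ∈ (Finset.univ.filter fun j => hS.eigenvalues j = 0) :=
      Finset.mem_filter.mpr ⟨Finset.mem_univ _, h⟩
    rw [h0] at hmem
    exact absurd hmem (Finset.notMem_empty i)
  have heigSinv : ∀ i, S⁻¹ *ᵥ vS i = (hS.eigenvalues i)⁻¹ • vS i := by
    intro i
    have h := congrArg (fun w => S⁻¹ *ᵥ w) (heigS i)
    simp only [Matrix.mulVec_smul] at h
    rw [Matrix.mulVec_mulVec, Matrix.nonsing_inv_mul _ hSdet, Matrix.one_mulVec] at h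
    have h2 := congrArg (fun w => (hS.eigenvalues i)⁻¹ • w) h
    simpa [smul_smul, inv_mul_cancel₀ (hSd0 i)] using h2.symm
  -- eigen data for P
  set vP : Fin n → Fin n → ℝ := fun j => ⇑(hPH.eigenvectorBasis j) with hvP
  have horthP : ∀ i j, vP i ⬝ᵥ vP j = if i = j then (1:ℝ) else 0 := by
    intro i j
    have h := orthonormal_iff_ite.mp hPH.eigenvectorBasis.orthonormal i j
    rw [EuclideanSpace.inner_eq_star_dotProduct, dotProduct_comm] at h
    simpa [dotProduct, hvP] using h
  have heigP : ∀ j, P *ᵥ vP j = hPH.eigenvalues j • vP j := fun j =>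
    hPH.mulVec_eigenvectorBasis j
  have hPpos : ∀ j, 0 < hPH.eigenvalues j := fun j => hP.eigenvalues_pos j
  have heigPinv : ∀ j, P⁻¹ *ᵥ vP j = (hPH.eigenvalues j)⁻¹ • vP j := by
    intro j
    have h := congrArg (fun w => P⁻¹ *ᵥ w) (heigP j)
    simp only [Matrix.mulVec_smul] at h
    rw [Matrix.mulVec_mulVec, Matrix.nonsing_inv_mul _ hPdet, Matrix.one_mulVec] at h
    have h2 := congrArg (fun w => (hPH.eigenvalues j)⁻¹ • w) h
    simpa [smul_smul, inv_mul_cancel₀ (ne_of_gt (hPpos j))] using h2.symm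
  -- counting
  have hcardNeg : Fintype.card {i : Fin m ⊕ Fin p // hS.eigenvalues i < 0} = p := by
    rw [Fintype.card_subtype]
    exact hSneg
  have hcardPos : Fintype.card {i : Fin m ⊕ Fin p // 0 < hS.eigenvalues i} = m := by
    rw [Fintype.card_subtype]
    exact hSpos
  -- the primal and dual embedding vectors
  set Tvec : (Fin n → ℝ) → (Fin m → ℝ) → ((Fin n ⊕ (Fin n ⊕ (Fin m ⊕ Fin p))) → ℝ) :=
    fun x u => Sum.elim x (Sum.elim (A *ᵥ x + B *ᵥ u) (Sum.elim u (C *ᵥ x + D *ᵥ u))) with hTvec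
  set Vvec : (Fin n → ℝ) → (Fin p → ℝ) → ((Fin n ⊕ (Fin n ⊕ (Fin m ⊕ Fin p))) → ℝ) :=
    fun b d => Sum.elim (-(Aᵀ *ᵥ b + Cᵀ *ᵥ d))
      (Sum.elim b (Sum.elim (-(Bᵀ *ᵥ b + Dᵀ *ᵥ d)) d)) with hVvec
  -- form identities
  have hPform : ∀ (x : Fin n → ℝ) (u : Fin m → ℝ),
      (Sum.elim x u) ⬝ᵥ (((fromBlocks 1 0 A B : Matrix (Fin n ⊕ Fin n) (Fin n ⊕ Fin m) ℝ)ᵀ * fromBlocks P 0 0 (-P) * (fromBlocks 1 0 A B : Matrix (Fin n ⊕ Fin n) (Fin n ⊕ Fin m) ℝ) +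
        (fromBlocks 0 1 C D : Matrix (Fin m ⊕ Fin p) (Fin n ⊕ Fin m) ℝ)ᵀ * S * (fromBlocks 0 1 C D : Matrix (Fin m ⊕ Fin p) (Fin n ⊕ Fin m) ℝ)) *ᵥ (Sum.elim x u)) =
      Tvec x u ⬝ᵥ (Mbig *ᵥ Tvec x u) := by
    intro x u
    rw [Matrix.add_mulVec, dotProduct_add, dot_sandwich, dot_sandwich]
    simp only [hTvec, hMbig, Matrix.fromBlocks_mulVec, Sum.elim_comp_inl, Sum.elim_comp_inr,
      Matrix.one_mulVec, Matrix.zero_mulVec,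
      Matrix.neg_mulVec, Matrix.mulVec_zero, add_zero, zero_add,
      sumElim_dotProduct_sumElim, dotProduct_neg, neg_dotProduct,
      zero_dotProduct, dotProduct_zero]
    ring
  have hDform : ∀ (b : Fin n → ℝ) (d : Fin p → ℝ),
      (Sum.elim b d) ⬝ᵥ (((fromBlocks 1 0 Aᵀ Cᵀ : Matrix (Fin n ⊕ Fin n) (Fin n ⊕ Fin p) ℝ)ᵀ * fromBlocks P⁻¹ 0 0 (-P⁻¹) *
          (fromBlocks 1 0 Aᵀ Cᵀ : Matrix (Fin n ⊕ Fin n) (Fin n ⊕ Fin p) ℝ) +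
        (fromBlocks 0 1 Bᵀ Dᵀ : Matrix (Fin p ⊕ Fin m) (Fin n ⊕ Fin p) ℝ)ᵀ *
          ((fromBlocks 0 (-1) 1 0 : Matrix (Fin p ⊕ Fin m) (Fin m ⊕ Fin p) ℝ) * S⁻¹ *
            (fromBlocks 0 (-1) 1 0 : Matrix (Fin m ⊕ Fin p) (Fin p ⊕ Fin m) ℝ)) *
          (fromBlocks 0 1 Bᵀ Dᵀ : Matrix (Fin p ⊕ Fin m) (Fin n ⊕ Fin p) ℝ)) *ᵥ (Sum.elim b d)) =
      -(Vvec b d ⬝ᵥ (Nbig *ᵥ Vvec b d)) := by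
    intro b d
    rw [Matrix.add_mulVec, dotProduct_add, dot_sandwich, dot_sandwich]
    rw [show (fromBlocks 0 1 Bᵀ Dᵀ) *ᵥ (Sum.elim b d) = Sum.elim d (Bᵀ *ᵥ b + Dᵀ *ᵥ d) by
      rw [Matrix.fromBlocks_mulVec]; simp]
    rw [twist_form]
    simp only [hVvec, hNbig, Matrix.fromBlocks_mulVec, Sum.elim_comp_inl, Sum.elim_comp_inr,
      Matrix.one_mulVec, Matrix.zero_mulVec,
      Matrix.neg_mulVec, Matrix.mulVec_neg, Matrix.mulVec_zero, add_zero, zero_add, neg_zero,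
      sumElim_dotProduct_sumElim, dotProduct_neg, neg_dotProduct,
      zero_dotProduct, dotProduct_zero, neg_neg]
    ring
  -- orthogonality
  have hOrth : ∀ x u b d, Tvec x u ⬝ᵥ Vvec b d = 0 := by
    intro x u b d
    simp only [hTvec, hVvec, sumElim_dotProduct_sumElim, dotProduct_neg,
      dotProduct_add, add_dotProduct, Matrix.dotProduct_mulVec,
      Matrix.vecMul_transpose]
    ring
  -- the linear maps T and V
  have hTadd : ∀ x x' u u', Tvec (x + x') (u + u') = Tvec x u + Tvec x' u' := by
    intro x x' u u'
    funext idx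
    rcases idx with i | i | i | i <;>
      simp [hTvec, Matrix.mulVec_add] <;> ring
  have hTsmul : ∀ (c : ℝ) x u, Tvec (c • x) (c • u) = c • Tvec x u := by
    intro c x u
    funext idx
    rcases idx with i | i | i | i <;>
      simp [hTvec, Matrix.mulVec_smul] <;> ring
  have hVadd : ∀ b b' d d', Vvec (b + b') (d + d') = Vvec b d + Vvec b' d' := by
    intro b b' d d'
    funext idx
    rcases idx with i | i | i | i <;>
      simp [hVvec, Matrix.mulVec_add] <;> ring
  have hVsmul : ∀ (c : ℝ) b d, Vvec (c • b) (c • d) = c • Vvec b d := by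
    intro c b d
    funext idx
    rcases idx with i | i | i | i <;>
      simp [hVvec, Matrix.mulVec_smul] <;> ring
  set Tmap : ((Fin n ⊕ Fin m) → ℝ) →ₗ[ℝ] ((Fin n ⊕ (Fin n ⊕ (Fin m ⊕ Fin p))) → ℝ) :=
    { toFun := fun z => Tvec (z ∘ Sum.inl) (z ∘ Sum.inr)
      map_add' := fun a b => hTadd (a ∘ Sum.inl) (b ∘ Sum.inl) (a ∘ Sum.inr) (b ∘ Sum.inr)
      map_smul' := fun c a => hTsmul c (a ∘ Sum.inl) (a ∘ Sum.inr) } with hTmap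
  set Vmap : ((Fin n ⊕ Fin p) → ℝ) →ₗ[ℝ] ((Fin n ⊕ (Fin n ⊕ (Fin m ⊕ Fin p))) → ℝ) :=
    { toFun := fun z => Vvec (z ∘ Sum.inl) (z ∘ Sum.inr)
      map_add' := fun a b => hVadd (a ∘ Sum.inl) (b ∘ Sum.inl) (a ∘ Sum.inr) (b ∘ Sum.inr)
      map_smul' := fun c a => hVsmul c (a ∘ Sum.inl) (a ∘ Sum.inr) } with hVmap
  have hTinj : Function.Injective Tmap := by
    intro a b hab
    funext idx
    rcases idx with i | i
    · exact congrFun hab (Sum.inl i)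
    · exact congrFun hab (Sum.inr (Sum.inr (Sum.inl i)))
  have hVinj : Function.Injective Vmap := by
    intro a b hab
    funext idx
    rcases idx with i | i
    · exact congrFun hab (Sum.inr (Sum.inl i))
    · exact congrFun hab (Sum.inr (Sum.inr (Sum.inr i)))
  have hTrank : Module.finrank ℝ (LinearMap.range Tmap) = n + m := by
    rw [LinearMap.finrank_range_of_inj hTinj, Module.finrank_fintype_fun_eq_card,
      Fintype.card_sum, Fintype.card_fin, Fintype.card_fin]
  have hVrank : Module.finrank ℝ (LinearMap.range Vmap) = n + p := by
    rw [LinearMap.finrank_range_of_inj hVinj, Module.finrank_fintype_fun_eq_card,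
      Fintype.card_sum, Fintype.card_fin, Fintype.card_fin]
  have hcardι : Fintype.card (Fin n ⊕ (Fin n ⊕ (Fin m ⊕ Fin p))) = n + (n + (m + p)) := by
    simp [Fintype.card_sum]
  -- hermitian-ness of the two LMI matrices
  have hprimalHerm : ((fromBlocks 1 0 A B : Matrix (Fin n ⊕ Fin n) (Fin n ⊕ Fin m) ℝ)ᵀ * fromBlocks P 0 0 (-P) * (fromBlocks 1 0 A B : Matrix (Fin n ⊕ Fin n) (Fin n ⊕ Fin m) ℝ) +
      (fromBlocks 0 1 C D : Matrix (Fin m ⊕ Fin p) (Fin n ⊕ Fin m) ℝ)ᵀ * S * (fromBlocks 0 1 C D : Matrix (Fin m ⊕ Fin p) (Fin n ⊕ Fin m) ℝ)).IsHermitian := by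
    apply Matrix.IsHermitian.add
    · rw [← Matrix.conjTranspose_eq_transpose_of_trivial]
      exact Matrix.isHermitian_conjTranspose_mul_mul _
        (isHermitian_fromBlocks_diag hPH hPH.neg)
    · rw [← Matrix.conjTranspose_eq_transpose_of_trivial]
      exact Matrix.isHermitian_conjTranspose_mul_mul _ hS
  have hFGherm : ((fromBlocks 0 (-1) 1 0 : Matrix (Fin p ⊕ Fin m) (Fin m ⊕ Fin p) ℝ) * S⁻¹ *
      (fromBlocks 0 (-1) 1 0 : Matrix (Fin m ⊕ Fin p) (Fin p ⊕ Fin m) ℝ)).IsHermitian := by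
    have hGH : (fromBlocks 0 (-1) 1 0 : Matrix (Fin m ⊕ Fin p) (Fin p ⊕ Fin m) ℝ)ᴴ
        = -(fromBlocks 0 (-1) 1 0 : Matrix (Fin p ⊕ Fin m) (Fin m ⊕ Fin p) ℝ) := by
      ext (i | i) (j | j) <;> simp [Matrix.fromBlocks, Matrix.one_apply, eq_comm]
    have hFH : (fromBlocks 0 (-1) 1 0 : Matrix (Fin p ⊕ Fin m) (Fin m ⊕ Fin p) ℝ)ᴴ
        = -(fromBlocks 0 (-1) 1 0 : Matrix (Fin m ⊕ Fin p) (Fin p ⊕ Fin m) ℝ) := by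
      ext (i | i) (j | j) <;> simp [Matrix.fromBlocks, Matrix.one_apply, eq_comm]
    unfold Matrix.IsHermitian
    rw [Matrix.conjTranspose_mul, Matrix.conjTranspose_mul, hGH, hFH, hSiH.eq]
    rw [Matrix.neg_mul, Matrix.mul_neg, Matrix.mul_neg, neg_neg, Matrix.mul_assoc]
  have hdualHerm : ((fromBlocks 1 0 Aᵀ Cᵀ : Matrix (Fin n ⊕ Fin n) (Fin n ⊕ Fin p) ℝ)ᵀ * fromBlocks P⁻¹ 0 0 (-P⁻¹) * (fromBlocks 1 0 Aᵀ Cᵀ : Matrix (Fin n ⊕ Fin n) (Fin n ⊕ Fin p) ℝ) +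
      (fromBlocks 0 1 Bᵀ Dᵀ : Matrix (Fin p ⊕ Fin m) (Fin n ⊕ Fin p) ℝ)ᵀ *
        ((fromBlocks 0 (-1) 1 0 : Matrix (Fin p ⊕ Fin m) (Fin m ⊕ Fin p) ℝ) * S⁻¹ *
          (fromBlocks 0 (-1) 1 0 : Matrix (Fin m ⊕ Fin p) (Fin p ⊕ Fin m) ℝ)) *
        (fromBlocks 0 1 Bᵀ Dᵀ : Matrix (Fin p ⊕ Fin m) (Fin n ⊕ Fin p) ℝ)).IsHermitian := by
    apply Matrix.IsHermitian.add
    · rw [← Matrix.conjTranspose_eq_transpose_of_trivial]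
      exact Matrix.isHermitian_conjTranspose_mul_mul _
        (isHermitian_fromBlocks_diag hPiH hPiH.neg)
    · rw [← Matrix.conjTranspose_eq_transpose_of_trivial]
      exact Matrix.isHermitian_conjTranspose_mul_mul _ hFGherm
  constructor
  · -- primal → dual
    intro h₁
    -- negative definite subspace for Mbig of dimension n + p
    set fam : (Fin n ⊕ {i : Fin m ⊕ Fin p // hS.eigenvalues i < 0}) →
        ((Fin n ⊕ (Fin n ⊕ (Fin m ⊕ Fin p))) → ℝ) :=
      Sum.elim (fun j => Sum.elim 0 (Sum.elim (vP j) 0))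
        (fun i => Sum.elim 0 (Sum.elim 0 (vS i.1))) with hfam
    set μf : (Fin n ⊕ {i : Fin m ⊕ Fin p // hS.eigenvalues i < 0}) → ℝ :=
      Sum.elim (fun j => -(hPH.eigenvalues j)) (fun i => hS.eigenvalues i.1) with hμf
    have horthfam : ∀ k l, fam k ⬝ᵥ fam l = if k = l then (1:ℝ) else 0 := by
      rintro (j | i) (l | l) <;>
        simp [hfam, sumElim_dotProduct_sumElim, horthP, horthS, Subtype.ext_iff]
    have heigfam : ∀ k, Mbig *ᵥ fam k = μf k • fam k := by
      rintro (j | i) <;> funext idx <;> rcases idx with i' | i' | i' <;>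
        simp [hfam, hμf, hMbig, Matrix.fromBlocks_mulVec, Sum.elim_comp_inl, Sum.elim_comp_inr,
          Matrix.neg_mulVec, Matrix.mulVec_zero, heigP, heigS, neg_zero, Pi.smul_apply,
          smul_eq_mul]
    have hμneg : ∀ k, μf k < 0 := by
      rintro (j | i)
      · simpa [hμf] using hPpos j
      · simpa [hμf] using i.2
    obtain ⟨W, hWrank, hWneg⟩ := exists_negdef_subspace fam horthfam Mbig μf heigfam hμneg
    have hWrank' : Module.finrank ℝ W = n + p := by
      rw [hWrank, Fintype.card_sum, Fintype.card_fin, hcardNeg]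
    have hUpos : ∀ u' ∈ LinearMap.range Tmap, 0 ≤ u' ⬝ᵥ Mbig *ᵥ u' := by
      rintro u' ⟨z, rfl⟩
      have h0 := h₁.dotProduct_mulVec_nonneg z
      rw [star_trivial] at h0
      rw [← Sum.elim_comp_inl_inr z, hPform] at h0
      exact h0
    refine Matrix.PosSemidef.of_dotProduct_mulVec_nonneg hdualHerm fun z => ?_
    rw [star_trivial, ← Sum.elim_comp_inl_inr z]
    erw [hDform]
    rw [le_neg, neg_zero]
    have hkey := key_lemma Mbig hMbigHerm hMdet (LinearMap.range Tmap) W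
      (by rw [hTrank, hWrank', hcardι]; omega) hWneg hUpos
      (Vvec (z ∘ Sum.inl) (z ∘ Sum.inr))
      (by
        rintro u' ⟨w, rfl⟩
        rw [dotProduct_comm]
        exact hOrth (w ∘ Sum.inl) (w ∘ Sum.inr) (z ∘ Sum.inl) (z ∘ Sum.inr))
    rwa [hMinv] at hkey
  · -- dual → primal
    intro h₂
    set fam : (Fin n ⊕ {i : Fin m ⊕ Fin p // 0 < hS.eigenvalues i}) →
        ((Fin n ⊕ (Fin n ⊕ (Fin m ⊕ Fin p))) → ℝ) :=
      Sum.elim (fun j => Sum.elim (vP j) (Sum.elim 0 0))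
        (fun i => Sum.elim 0 (Sum.elim 0 (vS i.1))) with hfam
    set μf : (Fin n ⊕ {i : Fin m ⊕ Fin p // 0 < hS.eigenvalues i}) → ℝ :=
      Sum.elim (fun j => -(hPH.eigenvalues j)⁻¹) (fun i => -(hS.eigenvalues i.1)⁻¹) with hμf
    have horthfam : ∀ k l, fam k ⬝ᵥ fam l = if k = l then (1:ℝ) else 0 := by
      rintro (j | i) (l | l) <;>
        simp [hfam, sumElim_dotProduct_sumElim, horthP, horthS, Subtype.ext_iff]
    have heigfam : ∀ k, (-Nbig) *ᵥ fam k = μf k • fam k := by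
      rintro (j | i) <;> funext idx <;> rcases idx with i' | i' | i' <;>
        simp [hfam, hμf, hNbig, Matrix.neg_mulVec, Matrix.fromBlocks_mulVec, Sum.elim_comp_inl,
          Sum.elim_comp_inr, Matrix.mulVec_zero, heigPinv, heigSinv, neg_zero, Pi.smul_apply,
          smul_eq_mul]
    have hμneg : ∀ k, μf k < 0 := by
      rintro (j | i)
      · simp only [hμf, Sum.elim_inl, neg_neg, Left.neg_neg_iff]
        exact inv_pos.mpr (hPpos j)
      · simp only [hμf, Sum.elim_inr, Left.neg_neg_iff]
        exact inv_pos.mpr i.2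
    obtain ⟨W, hWrank, hWneg⟩ := exists_negdef_subspace fam horthfam (-Nbig) μf heigfam hμneg
    have hWrank' : Module.finrank ℝ W = n + m := by
      rw [hWrank, Fintype.card_sum, Fintype.card_fin, hcardPos]
    have hUpos : ∀ v' ∈ LinearMap.range Vmap, 0 ≤ v' ⬝ᵥ (-Nbig) *ᵥ v' := by
      rintro v' ⟨z, rfl⟩
      have h0 := h₂.dotProduct_mulVec_nonneg z
      rw [star_trivial] at h0
      rw [← Sum.elim_comp_inl_inr z] at h0
      erw [hDform] at h0
      show 0 ≤ Vvec (z ∘ Sum.inl) (z ∘ Sum.inr) ⬝ᵥ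
        ((-Nbig) *ᵥ Vvec (z ∘ Sum.inl) (z ∘ Sum.inr))
      rw [Matrix.neg_mulVec, dotProduct_neg]
      linarith [h0]
    refine Matrix.PosSemidef.of_dotProduct_mulVec_nonneg hprimalHerm fun z => ?_
    rw [star_trivial, ← Sum.elim_comp_inl_inr z, hPform]
    have hkey := key_lemma (-Nbig) hnegNHerm hnegNdet (LinearMap.range Vmap) W
      (by rw [hVrank, hWrank', hcardι]; omega) hWneg hUpos
      (Tvec (z ∘ Sum.inl) (z ∘ Sum.inr))
      (by
        rintro v' ⟨w, rfl⟩
        exact hOrth (z ∘ Sum.inl) (z ∘ Sum.inr) (w ∘ Sum.inl) (w ∘ Sum.inr))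
    rw [hnegNinv, Matrix.neg_mulVec, dotProduct_neg] at hkey
    linarith [hkey]
end

section
/- (Extension of Sylvester's law of inertia) Let H ∈ 𝕊^n and M ∈ ℝ^{n×m}. If H has ν negative eigenvalues and MᵀHM has ν̂ negative eigenvalues, then ν + (m − n) − dim(ker M) ≤ ν̂. -/
open Matrix

variable {k : ℕ} {A : Matrix (Fin k) (Fin k) ℝ} (hA : A.IsHermitian)

noncomputable def coordMap (hA : A.IsHermitian) (P : Fin k → Prop) :
    (Fin k → ℝ) →ₗ[ℝ] ({i // P i} → ℝ) :=
  (LinearMap.funLeft ℝ ℝ Subtype.val).comp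
    (Matrix.mulVecLin (star (hA.eigenvectorUnitary : Matrix (Fin k) (Fin k) ℝ)))

lemma coordMap_surj (P : Fin k → Prop) : Function.Surjective (coordMap hA P) := by
  rw [coordMap, LinearMap.coe_comp]
  apply Function.Surjective.comp
  · exact LinearMap.funLeft_surjective_of_injective ℝ ℝ _ Subtype.val_injective
  · intro z
    refine ⟨(hA.eigenvectorUnitary : Matrix (Fin k) (Fin k) ℝ) *ᵥ z, ?_⟩
    simp only [mulVecLin_apply, mulVec_mulVec]
    rw [Unitary.coe_star_mul_self, one_mulVec]

lemma mem_ker_coordMap (P : Fin k → Prop) (x : Fin k → ℝ) :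
    x ∈ LinearMap.ker (coordMap hA P) ↔
      ∀ i, P i → (star (hA.eigenvectorUnitary : Matrix (Fin k) (Fin k) ℝ) *ᵥ x) i = 0 := by
  simp only [LinearMap.mem_ker, coordMap, LinearMap.comp_apply, mulVecLin_apply, funext_iff,
    LinearMap.funLeft_apply, Pi.zero_apply]
  constructor
  · intro h i hi; exact h ⟨i, hi⟩
  · intro h i; exact h i.1 i.2

open Classical in
lemma finrank_ker_coordMap (P : Fin k → Prop) :
    Module.finrank ℝ (LinearMap.ker (coordMap hA P)) + (Finset.univ.filter P).card = k := by
  have h := LinearMap.finrank_range_add_finrank_ker (coordMap hA P)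
  rw [LinearMap.range_eq_top.mpr (coordMap_surj hA P)] at h
  rw [finrank_top] at h
  simp only [Module.finrank_pi, Module.finrank_fin_fun, Fintype.card_fin] at h
  rw [Fintype.card_subtype] at h
  rw [add_comm] at h
  convert h using 3

lemma qform_eq (x : Fin k → ℝ) :
    x ⬝ᵥ A *ᵥ x = ∑ i, hA.eigenvalues i *
      ((star (hA.eigenvectorUnitary : Matrix (Fin k) (Fin k) ℝ) *ᵥ x) i) ^ 2 := by
  conv_lhs => rw [hA.spectral_theorem, Unitary.conjStarAlgAut_apply]
  rw [← mulVec_mulVec, ← mulVec_mulVec, dotProduct_mulVec]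
  have h1 : x ᵥ* (hA.eigenvectorUnitary : Matrix (Fin k) (Fin k) ℝ)
      = star (hA.eigenvectorUnitary : Matrix (Fin k) (Fin k) ℝ) *ᵥ x := by
    rw [star_eq_conjTranspose, conjTranspose_eq_transpose_of_trivial, mulVec_transpose]
  rw [h1]
  simp [dotProduct, mulVec_diagonal]
  exact Finset.sum_congr rfl fun i _ => by ring

lemma ker_star_mulVec {x : Fin k → ℝ}
    (hx : star (hA.eigenvectorUnitary : Matrix (Fin k) (Fin k) ℝ) *ᵥ x = 0) : x = 0 := by
  have : (hA.eigenvectorUnitary : Matrix (Fin k) (Fin k) ℝ) *ᵥ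
      (star (hA.eigenvectorUnitary : Matrix (Fin k) (Fin k) ℝ) *ᵥ x) = x := by
    rw [mulVec_mulVec, ← Unitary.coe_star, Unitary.coe_mul_star_self, one_mulVec]
  rw [hx, mulVec_zero] at this
  exact this.symm

/-- on the "nonnegative eigenvector" space, the form is nonneg -/
lemma qform_nonneg_of_mem {x : Fin k → ℝ}
    (hx : x ∈ LinearMap.ker (coordMap hA (fun i => hA.eigenvalues i < 0))) :
    0 ≤ x ⬝ᵥ A *ᵥ x := by
  rw [qform_eq hA]
  apply Finset.sum_nonneg
  intro i _
  by_cases h : hA.eigenvalues i < 0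
  · rw [(mem_ker_coordMap hA _ x).mp hx i h]; simp
  · exact mul_nonneg (not_lt.mp h) (sq_nonneg _)

/-- on the "negative eigenvector" space, the form is negative -/
lemma qform_neg_of_mem {x : Fin k → ℝ}
    (hx : x ∈ LinearMap.ker (coordMap hA (fun i => ¬ hA.eigenvalues i < 0))) (hx0 : x ≠ 0) :
    x ⬝ᵥ A *ᵥ x < 0 := by
  rw [qform_eq hA]
  set y := star (hA.eigenvectorUnitary : Matrix (Fin k) (Fin k) ℝ) *ᵥ x with hy
  have hyne : y ≠ 0 := fun h => hx0 (ker_star_mulVec hA h)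
  obtain ⟨j, hj⟩ : ∃ j, y j ≠ 0 := by
    by_contra h; push_neg at h; exact hyne (funext h)
  have hji : hA.eigenvalues j < 0 := by
    by_contra h; exact hj ((mem_ker_coordMap hA _ x).mp hx j h)
  have := Finset.sum_lt_sum (f := fun i => hA.eigenvalues i * (y i) ^ 2)
    (g := fun _ => (0:ℝ)) (s := Finset.univ)
    (fun i _ => by
      show hA.eigenvalues i * y i ^ 2 ≤ 0
      by_cases h : hA.eigenvalues i < 0
      · exact mul_nonpos_of_nonpos_of_nonneg h.le (sq_nonneg _)
      · rw [hy, (mem_ker_coordMap hA _ x).mp hx i h]; simp)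
    ⟨j, Finset.mem_univ j, by
      show hA.eigenvalues j * y j ^ 2 < 0
      exact mul_neg_of_neg_of_pos hji (pow_two_pos_of_ne_zero hj)⟩
  simpa using this

open Classical in
lemma finrank_le_inertiaNeg (S : Submodule ℝ (Fin k → ℝ))
    (hS : ∀ x ∈ S, x ≠ 0 → x ⬝ᵥ A *ᵥ x < 0) :
    Module.finrank ℝ S ≤ inertiaNeg hA := by
  have hdisj : Disjoint S (LinearMap.ker (coordMap hA (fun i => hA.eigenvalues i < 0))) := by
    rw [Submodule.disjoint_def]
    intro x hxS hxT
    by_contra hx0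
    exact absurd (qform_nonneg_of_mem hA hxT) (not_le.mpr (hS x hxS hx0))
  have h1 := Submodule.finrank_add_finrank_le_of_disjoint hdisj
  have h2 := finrank_ker_coordMap hA (fun i => hA.eigenvalues i < 0)
  rw [Module.finrank_fin_fun] at h1
  have h3 : (Finset.univ.filter fun i => hA.eigenvalues i < 0).card = inertiaNeg hA := rfl
  omega

/-- General dimension-counting lemma: a subspace of the preimage of `W`
complementary to `ker f`. -/
lemma exists_good_subspace {K V₁ V₂ : Type*} [Field K]
    [AddCommGroup V₁] [Module K V₁] [FiniteDimensional K V₁]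
    [AddCommGroup V₂] [Module K V₂] [FiniteDimensional K V₂]
    (f : V₁ →ₗ[K] V₂) (W : Submodule K V₂) :
    ∃ S : Submodule K V₁, (∀ x ∈ S, x ≠ 0 → f x ∈ W ∧ f x ≠ 0) ∧
      Module.finrank K W + Module.finrank K V₁
        ≤ Module.finrank K S + Module.finrank K V₂
          + Module.finrank K (LinearMap.ker f) := by
  set C := W.comap f with hCdef
  have hKC : LinearMap.ker f ≤ C := by
    intro x hx
    rw [hCdef, Submodule.mem_comap, LinearMap.mem_ker.mp hx]
    exact W.zero_mem
  have hg := LinearMap.finrank_range_add_finrank_ker (f.domRestrict C)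
  have e0 : LinearMap.range (f.domRestrict C) = LinearMap.range f ⊓ W := by
    rw [LinearMap.range_domRestrict, hCdef, Submodule.map_comap_eq]
  have ek : LinearMap.ker (f.domRestrict C) = (LinearMap.ker f).comap C.subtype :=
    LinearMap.ker_domRestrict C f
  rw [e0, ek] at hg
  have e1 : Module.finrank K ((LinearMap.ker f).comap C.subtype)
      = Module.finrank K (LinearMap.ker f) :=
    (Submodule.comapSubtypeEquivOfLe hKC).finrank_eq
  have hsup := Submodule.finrank_sup_add_finrank_inf_eq (LinearMap.range f) W
  have hsup_le := Submodule.finrank_le (LinearMap.range f ⊔ W)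
  have hrn := LinearMap.finrank_range_add_finrank_ker f
  obtain ⟨S', hS'⟩ := Submodule.exists_isCompl ((LinearMap.ker f).comap C.subtype)
  have hcompl := Submodule.finrank_add_eq_of_isCompl hS'
  refine ⟨S'.map C.subtype, ?_, ?_⟩
  · rintro x hxS hx0
    obtain ⟨x', hx'S', rfl⟩ := Submodule.mem_map.mp hxS
    have hxC : (x' : V₁) ∈ C := x'.2
    refine ⟨Submodule.mem_comap.mp hxC, ?_⟩
    intro h0
    have hx'K : x' ∈ (LinearMap.ker f).comap C.subtype := by
      rw [Submodule.mem_comap]; exact LinearMap.mem_ker.mpr h0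
    have hz : x' = 0 := by
      have hb := hS'.inf_eq_bot
      have hmem : x' ∈ ((LinearMap.ker f).comap C.subtype ⊓ S') := ⟨hx'K, hx'S'⟩
      rw [hb] at hmem
      exact hmem
    exact hx0 (by rw [hz]; exact map_zero _)
  · have hSrank : Module.finrank K (S'.map C.subtype) = Module.finrank K S' :=
      Submodule.finrank_map_subtype_eq C S'
    have hC2 : Module.finrank K C = Module.finrank K (W.comap f) := rfl
    omega

open Classical in
lemma finrank_negSpace {k : ℕ} {A : Matrix (Fin k) (Fin k) ℝ} (hA : A.IsHermitian) :
    Module.finrank ℝ (LinearMap.ker (coordMap hA (fun i => ¬ hA.eigenvalues i < 0)))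
      = inertiaNeg hA := by
  have h1 := finrank_ker_coordMap hA (fun i => ¬ hA.eigenvalues i < 0)
  have h2 : (Finset.univ.filter fun i => hA.eigenvalues i < 0).card
      + (Finset.univ.filter fun i => ¬ hA.eigenvalues i < 0).card = k := by
    rw [Finset.card_filter_add_card_filter_not]
    simp
  have h3 : (Finset.univ.filter fun i => hA.eigenvalues i < 0).card = inertiaNeg hA := rfl
  rw [Finset.filter_congr_decidable] at h1
  omega

/-- Extension of Sylvester's law of inertia (Dancis):
`ν + (m − n) − dim ker M ≤ ν̂`. -/
theorem stmt10 {n m : ℕ}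
    (H : Matrix (Fin n) (Fin n) ℝ) (hH : H.IsHermitian)
    (M : Matrix (Fin n) (Fin m) ℝ)
    (hHM : (Mᵀ * H * M).IsHermitian) :
    (inertiaNeg hH : ℤ) + ((m : ℤ) - n)
        - Module.finrank ℝ (LinearMap.ker M.mulVecLin)
      ≤ inertiaNeg hHM := by
  obtain ⟨S, hSmem, hSrank⟩ := exists_good_subspace M.mulVecLin
    (LinearMap.ker (coordMap hH (fun i => ¬ hH.eigenvalues i < 0)))
  have hW := finrank_negSpace hH
  have hSneg : ∀ x ∈ S, x ≠ 0 → x ⬝ᵥ (Mᵀ * H * M) *ᵥ x < 0 := by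
    intro x hxS hx0
    obtain ⟨hmem, hne⟩ := hSmem x hxS hx0
    have hq : x ⬝ᵥ (Mᵀ * H * M) *ᵥ x = (M *ᵥ x) ⬝ᵥ H *ᵥ (M *ᵥ x) := by
      rw [← mulVec_mulVec, ← mulVec_mulVec, dotProduct_mulVec, vecMul_transpose]
    rw [hq]
    exact qform_neg_of_mem hH hmem hne
  have hkey := finrank_le_inertiaNeg hHM S hSneg
  rw [Module.finrank_fin_fun, Module.finrank_fin_fun] at hSrank
  omega
end

section
/- Consider data matrices X₋, X₊ ∈ ℝ^{n×T}, U₋ ∈ ℝ^{m×T}, a noise direction matrix E ∈ ℝ^{n×d}, and a symmetric Φ ∈ 𝕊^{d+T} with Φ22 negative definite, Φ11 − Φ12 Φ22⁻¹ Φ21 ≥ 0. Define Φ_{Eᵀ} = diag(E, I_T) Φ diag(Eᵀ, I_T) and N_k = [I, X₊; 0, −X₋; 0, −U₋]-structured matrix, i.e., N_k = L Φ_{Eᵀ} Lᵀ where L is the (n+n+m)×(n+T) block matrix with rows [I_n, X₊], [0, −X₋], [0, −U₋]. Then a pair (A, B) ∈ ℝ^{n×n} × ℝ^{n×m} satisfies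 X₊ = A X₋ + B U₋ + E W₋ for some W₋ ∈ ℝ^{d×T} with [I; W₋ᵀ]ᵀ Φ [I; W₋ᵀ] ≥ 0 if and only if [I; Aᵀ; Bᵀ]ᵀ N_k [I; Aᵀ; Bᵀ] ≥ 0. -/
open Matrix
set_option linter.unusedSectionVars false
set_option linter.unusedVariables false

namespace Stmt12Aux

variable {k l p q : Type*} [Fintype k] [Fintype l] [Fintype p] [Fintype q]

lemma ct_eq (A : Matrix k l ℝ) : Aᴴ = Aᵀ := by
  ext i j; simp [conjTranspose_apply]

lemma psd_apply {M : Matrix k k ℝ} (hM : M.PosSemidef) (v : k → ℝ) :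
    0 ≤ v ⬝ᵥ (M *ᵥ v) := by simpa using hM.dotProduct_mulVec_nonneg v

lemma psd_of {M : Matrix k k ℝ} (hsym : Mᵀ = M) (h : ∀ v, 0 ≤ v ⬝ᵥ (M *ᵥ v)) :
    M.PosSemidef := Matrix.PosSemidef.of_dotProduct_mulVec_nonneg (by rw [Matrix.IsHermitian, ct_eq, hsym]) fun v => by simpa using h v

lemma dot_cs (x y : k → ℝ) : (x ⬝ᵥ y) ^ 2 ≤ (x ⬝ᵥ x) * (y ⬝ᵥ y) := by
  simpa [dotProduct, pow_two] using Finset.sum_mul_sq_le_sq_mul_sq Finset.univ x y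

lemma dot_self_nonneg (x : k → ℝ) : 0 ≤ x ⬝ᵥ x :=
  Finset.sum_nonneg fun i _ => mul_self_nonneg _

lemma sq_le_helper {a b : ℝ} (ha : 0 ≤ a) (hb : 0 ≤ b) (h : a ^ 2 ≤ b * a) : a ≤ b := by
  rcases eq_or_lt_of_le ha with h0 | h0
  · linarith
  · nlinarith

lemma quad_sub [DecidableEq l] (A : Matrix k l ℝ) (v : l → ℝ) :
    v ⬝ᵥ ((1 - Aᵀ * A) *ᵥ v) = v ⬝ᵥ v - (A *ᵥ v) ⬝ᵥ (A *ᵥ v) := by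
  rw [sub_mulVec, dotProduct_sub, one_mulVec, ← mulVec_mulVec, dotProduct_mulVec,
    vecMul_transpose]

lemma trace_transpose_mul_self_nonneg (A : Matrix k l ℝ) : 0 ≤ (Aᵀ * A).trace := by
  refine Finset.sum_nonneg fun j _ => ?_
  simpa [Matrix.diag, mul_apply] using
    Finset.sum_nonneg (fun i (_ : i ∈ Finset.univ) => mul_self_nonneg (A i j))

lemma eq_zero_of_trace_transpose_mul_self (A : Matrix k l ℝ)
    (h : (Aᵀ * A).trace = 0) : A = 0 := by
  have key : ∀ j, ∀ i, A i j = 0 := by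
    have h' : ∑ j, ∑ i, A i j * A i j = 0 := by
      simpa [Matrix.trace, Matrix.diag, mul_apply] using h
    intro j i
    have hj := (Finset.sum_eq_zero_iff_of_nonneg
      (fun j (_ : j ∈ Finset.univ) =>
        Finset.sum_nonneg fun i _ => mul_self_nonneg (A i j))).mp h' j (by simp)
    have hi := (Finset.sum_eq_zero_iff_of_nonneg
      (fun i (_ : i ∈ Finset.univ) => mul_self_nonneg (A i j))).mp hj i (by simp)
    exact mul_self_eq_zero.mp hi
  ext i j; exact key j i

lemma trace_nonneg' [DecidableEq k] {M : Matrix k k ℝ} (hM : M.PosSemidef) :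
    0 ≤ M.trace := by
  refine Finset.sum_nonneg fun i _ => ?_
  have := psd_apply hM (Pi.single i 1)
  simpa [Matrix.diag, mulVec_single, dotProduct_single] using this

open scoped MatrixOrder in
lemma trace_mul_psd_nonneg [DecidableEq k] {P Q : Matrix k k ℝ}
    (hP : P.PosSemidef) (hQ : Q.PosSemidef) : 0 ≤ (P * Q).trace := by
  obtain ⟨B, hB⟩ := CStarAlgebra.nonneg_iff_eq_star_mul_self.mp hQ.nonneg
  rw [Matrix.star_eq_conjTranspose] at hB
  rw [hB, ← Matrix.mul_assoc, Matrix.trace_mul_comm]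
  have := trace_nonneg' (hP.mul_mul_conjTranspose_same B)
  rwa [Matrix.mul_assoc] at this

lemma exists_pinv [DecidableEq k] {M : Matrix k k ℝ} (hM : M.PosSemidef) :
    ∃ G : Matrix k k ℝ, G.PosSemidef ∧ M * G = G * M ∧ M * G * M = M ∧ G * M * G = G := by
  classical
  set U : Matrix k k ℝ := (hM.1.eigenvectorUnitary : Matrix k k ℝ) with hUdef
  have hU1 : U * star U = 1 := Matrix.mem_unitaryGroup_iff.mp hM.1.eigenvectorUnitary.2
  have hU2 : star U * U = 1 := Matrix.mem_unitaryGroup_iff'.mp hM.1.eigenvectorUnitary.2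
  set ev : k → ℝ := hM.1.eigenvalues
  have hoe : (RCLike.ofReal ∘ ev : k → ℝ) = ev := funext fun i => rfl
  have hspec : M = U * Matrix.diagonal ev * star U := by
    have := hM.1.spectral_theorem
    rw [hoe] at this
    exact this
  set D := Matrix.diagonal ev with hD
  set Di := Matrix.diagonal (fun i => (ev i)⁻¹) with hDi
  have collapse : ∀ P Q : Matrix k k ℝ,
      (U * P * star U) * (U * Q * star U) = U * (P * Q) * star U := by
    intro P Q
    simp only [Matrix.mul_assoc]
    rw [← Matrix.mul_assoc (star U) U (Q * star U), hU2, Matrix.one_mul]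
  have hDcomm : D * Di = Di * D := by
    rw [hD, hDi, Matrix.diagonal_mul_diagonal, Matrix.diagonal_mul_diagonal]
    exact congrArg Matrix.diagonal (funext fun i => mul_comm _ _)
  have hDDD : D * Di * D = D := by
    rw [hD, hDi, Matrix.diagonal_mul_diagonal, Matrix.diagonal_mul_diagonal]
    refine congrArg Matrix.diagonal (funext fun i => ?_)
    rcases eq_or_ne (ev i) 0 with h | h
    · simp [h]
    · field_simp
  have hDiDDi : Di * D * Di = Di := by
    rw [hD, hDi, Matrix.diagonal_mul_diagonal, Matrix.diagonal_mul_diagonal]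
    refine congrArg Matrix.diagonal (funext fun i => ?_)
    rcases eq_or_ne (ev i) 0 with h | h
    · simp [h]
    · field_simp
  refine ⟨U * Di * star U, ?_, ?_, ?_, ?_⟩
  · have hdiag : Di.PosSemidef :=
      Matrix.posSemidef_diagonal_iff.mpr fun i => inv_nonneg.mpr (hM.eigenvalues_nonneg i)
    simpa [Matrix.star_eq_conjTranspose] using hdiag.mul_mul_conjTranspose_same U
  · rw [hspec, collapse, collapse, hDcomm]
  · rw [hspec, collapse, collapse, hDDD]
  · rw [hspec, collapse, collapse, hDiDDi]

lemma contraction_transpose [DecidableEq p] [DecidableEq q] {C : Matrix p q ℝ}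
    (h : (1 - Cᵀ * C).PosSemidef) : (1 - C * Cᵀ).PosSemidef := by
  have hq : ∀ v, (C *ᵥ v) ⬝ᵥ (C *ᵥ v) ≤ v ⬝ᵥ v := by
    intro v
    have := psd_apply h v
    rw [quad_sub] at this
    linarith
  refine psd_of ?_ ?_
  · rw [transpose_sub, transpose_one, transpose_mul, transpose_transpose]
  · intro w
    have hre : (1 - C * Cᵀ) = (1 - Cᵀᵀ * Cᵀ) := by rw [transpose_transpose]
    rw [hre, quad_sub]
    rw [sub_nonneg]
    have h1 : (Cᵀ *ᵥ w) ⬝ᵥ (Cᵀ *ᵥ w) = w ⬝ᵥ (C *ᵥ (Cᵀ *ᵥ w)) := by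
      have : w ⬝ᵥ (C *ᵥ (Cᵀ *ᵥ w)) = (Cᵀ *ᵥ w) ⬝ᵥ (Cᵀ *ᵥ w) := by
        rw [dotProduct_mulVec, ← mulVec_transpose]
      exact this.symm
    have h2 := dot_cs w (C *ᵥ (Cᵀ *ᵥ w))
    have h3 := hq (Cᵀ *ᵥ w)
    have h4 : ((Cᵀ *ᵥ w) ⬝ᵥ (Cᵀ *ᵥ w)) ^ 2 ≤ (w ⬝ᵥ w) * ((Cᵀ *ᵥ w) ⬝ᵥ (Cᵀ *ᵥ w)) := by
      calc ((Cᵀ *ᵥ w) ⬝ᵥ (Cᵀ *ᵥ w)) ^ 2 = (w ⬝ᵥ (C *ᵥ (Cᵀ *ᵥ w))) ^ 2 := by rw [h1]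
        _ ≤ (w ⬝ᵥ w) * ((C *ᵥ (Cᵀ *ᵥ w)) ⬝ᵥ (C *ᵥ (Cᵀ *ᵥ w))) := h2
        _ ≤ (w ⬝ᵥ w) * ((Cᵀ *ᵥ w) ⬝ᵥ (Cᵀ *ᵥ w)) :=
            mul_le_mul_of_nonneg_left h3 (dot_self_nonneg w)
    exact sq_le_helper (dot_self_nonneg _) (dot_self_nonneg _) h4

lemma douglas [DecidableEq k] [DecidableEq p] [DecidableEq q] (Y : Matrix k p ℝ) (X : Matrix k q ℝ)
    (h : (Y * Yᵀ - X * Xᵀ).PosSemidef) :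
    ∃ C : Matrix p q ℝ, Y * C = X ∧ (1 - Cᵀ * C).PosSemidef := by
  classical
  have hMpsd : (Yᵀ * Y).PosSemidef := by
    have := Matrix.posSemidef_conjTranspose_mul_self Y
    rwa [ct_eq] at this
  obtain ⟨G, hG, hcomm, hMGM, hGMG⟩ := exists_pinv hMpsd
  set M := Yᵀ * Y with hMdef
  have hGsym : Gᵀ = G := by
    have := hG.1; rwa [Matrix.IsHermitian, ct_eq] at this
  have hMsym : Mᵀ = M := by rw [hMdef, transpose_mul, transpose_transpose]
  -- Step a : Y * (G * M) = Y
  have hstepA : Y * (G * M) = Y := by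
    have hz : (Y * (G * M) - Y)ᵀ * (Y * (G * M) - Y) = 0 := by
      have ht : (Y * (G * M) - Y)ᵀ = (M * G - 1) * Yᵀ := by
        rw [transpose_sub, transpose_mul, transpose_mul, hGsym, hMsym, Matrix.sub_mul,
          Matrix.one_mul, Matrix.mul_assoc]
      have h2 : Yᵀ * (Y * (G * M) - Y) = M * (G * M) - M := by
        rw [Matrix.mul_sub, ← Matrix.mul_assoc, ← hMdef]
      rw [ht, Matrix.mul_assoc, h2, ← Matrix.mul_assoc M G M, hMGM, sub_self, Matrix.mul_zero]
    have hz' : (Y * (G * M) - Y)ᴴ * (Y * (G * M) - Y) = 0 := by rwa [ct_eq]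
    have := Matrix.conjTranspose_mul_self_eq_zero.mp hz'
    exact sub_eq_zero.mp this
  set P := Y * G * Yᵀ with hPdef
  have hPsym : Pᵀ = P := by
    rw [hPdef, transpose_mul, transpose_mul, transpose_transpose, hGsym, Matrix.mul_assoc]
  have hPY : P * Y = Y := by
    rw [hPdef, Matrix.mul_assoc, Matrix.mul_assoc, ← hMdef, ← Matrix.mul_assoc, Matrix.mul_assoc]
    exact hstepA
  have hPP : P * P = P := by
    have : P * P = Y * (G * M * G) * Yᵀ := by
      rw [hPdef]
      simp only [Matrix.mul_assoc, hMdef]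
    rw [this, hGMG, hPdef, Matrix.mul_assoc]
  -- Step c : P * X = X
  have hPX : P * X = X := by
    have h1P : (1 - P)ᵀ * (1 - P) = 1 - P := by
      rw [transpose_sub, transpose_one, hPsym, Matrix.mul_sub, Matrix.mul_one, Matrix.sub_mul,
        Matrix.one_mul, hPP, sub_self, sub_zero]
    have h1Ppsd : (1 - P).PosSemidef := by
      have := Matrix.posSemidef_conjTranspose_mul_self (1 - P)
      rwa [ct_eq, h1P] at this
    have h1PY : (1 - P) * (Y * Yᵀ) = 0 := by
      rw [Matrix.sub_mul, Matrix.one_mul, ← Matrix.mul_assoc, hPY, sub_self]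
    have htr : ((X - P * X)ᵀ * (X - P * X)).trace = -(((1 - P) * (Y * Yᵀ - X * Xᵀ)).trace) := by
      have e0 : X - P * X = (1 - P) * X := by rw [Matrix.sub_mul, Matrix.one_mul]
      have e1 : (X - P * X)ᵀ * (X - P * X) = Xᵀ * ((1 - P) * X) := by
        rw [e0, transpose_mul, Matrix.mul_assoc, ← Matrix.mul_assoc ((1:Matrix k k ℝ) - P)ᵀ,
          h1P]
      have e2 : (Xᵀ * ((1 - P) * X)).trace = (((1 - P) * X) * Xᵀ).trace :=
        Matrix.trace_mul_comm _ _
      have e3 : ((1 - P) * X) * Xᵀ = (1 - P) * (X * Xᵀ) := Matrix.mul_assoc _ _ _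
      have e4 : (1 - P) * (X * Xᵀ) = -((1 - P) * (Y * Yᵀ - X * Xᵀ)) := by
        rw [Matrix.mul_sub, h1PY, zero_sub, neg_neg]
      rw [e1, e2, e3, e4, trace_neg]
    have hge : 0 ≤ (((1 - P) * (Y * Yᵀ - X * Xᵀ))).trace := trace_mul_psd_nonneg h1Ppsd h
    have hle := trace_transpose_mul_self_nonneg (X - P * X)
    have hz : ((X - P * X)ᵀ * (X - P * X)).trace = 0 := by rw [htr]; linarith
    have := eq_zero_of_trace_transpose_mul_self _ hz
    have := sub_eq_zero.mp this
    exact this.symm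
  -- the contraction C
  refine ⟨G * (Yᵀ * X), ?_, ?_⟩
  · calc Y * (G * (Yᵀ * X)) = P * X := by rw [hPdef]; simp only [Matrix.mul_assoc]
      _ = X := hPX
  · have hMGG : M * G * G = G := by rw [hcomm]; exact hGMG
    refine psd_of ?_ ?_
    · rw [transpose_sub, transpose_one, transpose_mul, transpose_transpose]
    · intro v
      rw [quad_sub, sub_nonneg]
      set Cm := G * (Yᵀ * X) with hCm
      set u : p → ℝ := Cm *ᵥ v with hu
      set w : k → ℝ := Y *ᵥ (G *ᵥ u) with hw
      have f1 : Yᵀ *ᵥ w = u := by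
        rw [hw, hu]
        simp only [mulVec_mulVec]
        congr 1
        simp only [← Matrix.mul_assoc]
        rw [← hMdef, hCm, ← Matrix.mul_assoc, hMGG]
      have huG : u = G *ᵥ (Yᵀ *ᵥ (X *ᵥ v)) := by
        rw [hu, hCm]
        simp only [mulVec_mulVec, Matrix.mul_assoc]
      have f2 : u ⬝ᵥ u = v ⬝ᵥ (Xᵀ *ᵥ w) := by
      
        have c1 : v ⬝ᵥ (Xᵀ *ᵥ w) = (X *ᵥ v) ⬝ᵥ w := by
          rw [dotProduct_mulVec, vecMul_transpose]
        have c2 : (X *ᵥ v) ⬝ᵥ w = (Yᵀ *ᵥ (X *ᵥ v)) ⬝ᵥ (G *ᵥ u) := by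
          rw [hw, dotProduct_mulVec, ← mulVec_transpose]
        have c3 : (Yᵀ *ᵥ (X *ᵥ v)) ⬝ᵥ (G *ᵥ u) = (G *ᵥ (Yᵀ *ᵥ (X *ᵥ v))) ⬝ᵥ u := by
          rw [dotProduct_mulVec, ← mulVec_transpose, hGsym]
        rw [c1, c2, c3, ← huG]
      have f3 : (Xᵀ *ᵥ w) ⬝ᵥ (Xᵀ *ᵥ w) ≤ u ⬝ᵥ u := by
        have hpw := psd_apply h w
        rw [sub_mulVec, dotProduct_sub, ← mulVec_mulVec, ← mulVec_mulVec,
          dotProduct_mulVec w Y, ← mulVec_transpose,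
          dotProduct_mulVec w X, ← mulVec_transpose, f1] at hpw
        linarith
      have h4 : (u ⬝ᵥ u) ^ 2 ≤ (v ⬝ᵥ v) * (u ⬝ᵥ u) := by
        calc (u ⬝ᵥ u) ^ 2 = (v ⬝ᵥ (Xᵀ *ᵥ w)) ^ 2 := by rw [f2]
          _ ≤ (v ⬝ᵥ v) * ((Xᵀ *ᵥ w) ⬝ᵥ (Xᵀ *ᵥ w)) := dot_cs _ _
          _ ≤ (v ⬝ᵥ v) * (u ⬝ᵥ u) := mul_le_mul_of_nonneg_left f3 (dot_self_nonneg v)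
      exact sq_le_helper (dot_self_nonneg _) (dot_self_nonneg _) h4

open scoped MatrixOrder in
lemma exists_sqrt [DecidableEq k] {S : Matrix k k ℝ} (hS : S.PosSemidef) :
    ∃ R : Matrix k k ℝ, R.PosSemidef ∧ R * R = S :=
  ⟨CFC.sqrt S, (CFC.sqrt_nonneg S).posSemidef, CFC.sqrt_mul_sqrt_self S hS.nonneg⟩

lemma key {nn dd tt : Type*} [Fintype nn] [Fintype dd] [Fintype tt]
    [DecidableEq nn] [DecidableEq dd] [DecidableEq tt]
    {S : Matrix dd dd ℝ} {K : Matrix tt tt ℝ} (E : Matrix nn dd ℝ) (H : Matrix nn tt ℝ)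
    (hS : S.PosSemidef) (hK : K.PosDef)
    (h : (E * S * Eᵀ - H * K * Hᵀ).PosSemidef) :
    ∃ V : Matrix dd tt ℝ, E * V = H ∧ (S - V * K * Vᵀ).PosSemidef := by
  classical
  obtain ⟨R, hRpsd, hR2⟩ := exists_sqrt hS
  have hRsym : Rᵀ = R := by
    have := hRpsd.1; rwa [Matrix.IsHermitian, ct_eq] at this
  have hKpsd : K.PosSemidef := hK.posSemidef
  obtain ⟨Q, hQpsd, hQ2⟩ := exists_sqrt hKpsd
  have hQsym : Qᵀ = Q := by
    have := hQpsd.1; rwa [Matrix.IsHermitian, ct_eq] at this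
  have hKdet : IsUnit K.det := hK.det_pos.ne'.isUnit
  have hQdet : IsUnit Q.det := by
    have hdd : Q.det * Q.det = K.det := by rw [← det_mul, hQ2]
    refine isUnit_iff_ne_zero.mpr fun h0 => ?_
    rw [h0, mul_zero] at hdd
    exact hK.det_pos.ne' hdd.symm
  have hQi1 : Q * Q⁻¹ = 1 := Matrix.mul_nonsing_inv _ hQdet
  have hQi2 : Q⁻¹ * Q = 1 := Matrix.nonsing_inv_mul _ hQdet
  have hQisym : Q⁻¹ᵀ = Q⁻¹ := by rw [Matrix.transpose_nonsing_inv, hQsym]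
  -- Douglas
  have hYX : (E * R) * (E * R)ᵀ - (H * Q) * (H * Q)ᵀ = E * S * Eᵀ - H * K * Hᵀ := by
    rw [transpose_mul, transpose_mul, hRsym, hQsym]
    have e1 : E * R * (R * Eᵀ) = E * S * Eᵀ := by
      rw [Matrix.mul_assoc E R, ← Matrix.mul_assoc R R, hR2, ← Matrix.mul_assoc]
    have e2 : H * Q * (Q * Hᵀ) = H * K * Hᵀ := by
      rw [Matrix.mul_assoc H Q, ← Matrix.mul_assoc Q Q, hQ2, ← Matrix.mul_assoc]
    rw [e1, e2]
  obtain ⟨C, hYC, hCpsd⟩ := douglas (E * R) (H * Q) (by rwa [hYX])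
  have hCC : (1 - C * Cᵀ).PosSemidef := contraction_transpose hCpsd
  refine ⟨R * (C * Q⁻¹), ?_, ?_⟩
  · calc E * (R * (C * Q⁻¹)) = ((E * R) * C) * Q⁻¹ := by simp only [Matrix.mul_assoc]
      _ = (H * Q) * Q⁻¹ := by rw [hYC]
      _ = H := by rw [Matrix.mul_assoc, hQi1, Matrix.mul_one]
  · have hVt : (R * (C * Q⁻¹))ᵀ = Q⁻¹ * (Cᵀ * R) := by
      rw [transpose_mul, transpose_mul, hRsym, hQisym, Matrix.mul_assoc]
    have hmid : (R * (C * Q⁻¹)) * K * (Q⁻¹ * (Cᵀ * R)) = R * (C * Cᵀ) * R := by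
      have hq : Q⁻¹ * K * Q⁻¹ = 1 := by
        rw [← hQ2, ← Matrix.mul_assoc, hQi2, Matrix.one_mul, hQi1]
      calc (R * (C * Q⁻¹)) * K * (Q⁻¹ * (Cᵀ * R))
          = R * C * (Q⁻¹ * K * Q⁻¹) * (Cᵀ * R) := by simp only [Matrix.mul_assoc]
        _ = R * (C * Cᵀ) * R := by rw [hq, Matrix.mul_one]; simp only [Matrix.mul_assoc]
    have hfinal : S - (R * (C * Q⁻¹)) * K * (R * (C * Q⁻¹))ᵀ = R * (1 - C * Cᵀ) * Rᵀ := by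
      rw [hVt, hmid, Matrix.mul_sub, Matrix.sub_mul, Matrix.mul_one, hRsym, hR2]
    rw [hfinal]
    have := hCC.mul_mul_conjTranspose_same R
    rwa [ct_eq] at this

lemma quad_fromRows {d t x : Type*} [Fintype d] [Fintype t] [Fintype x]
    (P11 : Matrix d d ℝ) (P12 : Matrix d t ℝ) (P21 : Matrix t d ℝ) (P22 : Matrix t t ℝ)
    (P : Matrix d x ℝ) (Qm : Matrix t x ℝ) :
    (fromRows P Qm)ᵀ * fromBlocks P11 P12 P21 P22 * fromRows P Qm
      = Pᵀ * P11 * P + Pᵀ * P12 * Qm + Qmᵀ * P21 * P + Qmᵀ * P22 * Qm := by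
  rw [transpose_fromRows, Matrix.mul_assoc, fromBlocks_mul_fromRows, fromCols_mul_fromRows,
    Matrix.mul_add, Matrix.mul_add]
  simp only [Matrix.mul_assoc]
  abel

lemma quad_fromColumns {d t x : Type*} [Fintype d] [Fintype t] [Fintype x]
    (P11 : Matrix d d ℝ) (P12 : Matrix d t ℝ) (P21 : Matrix t d ℝ) (P22 : Matrix t t ℝ)
    (P : Matrix x d ℝ) (Qm : Matrix x t ℝ) :
    fromCols P Qm * fromBlocks P11 P12 P21 P22 * (fromCols P Qm)ᵀ
      = P * P11 * Pᵀ + P * P12 * Qmᵀ + Qm * P21 * Pᵀ + Qm * P22 * Qmᵀ := by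
  rw [transpose_fromCols, fromCols_mul_fromBlocks, fromCols_mul_fromRows,
    Matrix.add_mul, Matrix.add_mul]
  simp only [Matrix.mul_assoc]
  abel

lemma complete_square {d t : Type*} [Fintype d] [Fintype t] [DecidableEq t]
    (P11 : Matrix d d ℝ) (P12 : Matrix d t ℝ) (P22 : Matrix t t ℝ)
    (hi1 : P22 * P22⁻¹ = 1) (hi2 : P22⁻¹ * P22 = 1) (hit : P22⁻¹ᵀ = P22⁻¹)
    (W : Matrix d t ℝ) :
    P11 + P12 * Wᵀ + W * P12ᵀ + W * P22 * Wᵀ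
      = (P11 - P12 * P22⁻¹ * P12ᵀ) + (W + P12 * P22⁻¹) * P22 * (W + P12 * P22⁻¹)ᵀ := by
  have hc1 : ∀ Z : Matrix t d ℝ, P22 * (P22⁻¹ * Z) = Z := fun Z => by
    rw [← Matrix.mul_assoc, hi1, Matrix.one_mul]
  have hc2 : ∀ Z : Matrix t d ℝ, P22⁻¹ * (P22 * Z) = Z := fun Z => by
    rw [← Matrix.mul_assoc, hi2, Matrix.one_mul]
  rw [transpose_add, transpose_mul, hit]
  simp only [Matrix.mul_add, Matrix.add_mul, Matrix.mul_sub, Matrix.sub_mul,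
    Matrix.mul_assoc, hc1, hc2]
  abel

lemma complete_square2 {nn d t : Type*} [Fintype nn] [Fintype d] [Fintype t] [DecidableEq t]
    (P11 : Matrix d d ℝ) (P12 : Matrix d t ℝ) (P22 : Matrix t t ℝ)
    (hi1 : P22 * P22⁻¹ = 1) (hi2 : P22⁻¹ * P22 = 1) (hit : P22⁻¹ᵀ = P22⁻¹)
    (E : Matrix nn d ℝ) (G : Matrix nn t ℝ) :
    E * P11 * Eᵀ + E * P12 * Gᵀ + G * P12ᵀ * Eᵀ + G * P22 * Gᵀ
      = E * (P11 - P12 * P22⁻¹ * P12ᵀ) * Eᵀ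
        + (G + E * (P12 * P22⁻¹)) * P22 * (G + E * (P12 * P22⁻¹))ᵀ := by
  have hc1 : ∀ Z : Matrix t nn ℝ, P22 * (P22⁻¹ * Z) = Z := fun Z => by
    rw [← Matrix.mul_assoc, hi1, Matrix.one_mul]
  have hc2 : ∀ Z : Matrix t nn ℝ, P22⁻¹ * (P22 * Z) = Z := fun Z => by
    rw [← Matrix.mul_assoc, hi2, Matrix.one_mul]
  rw [transpose_add, transpose_mul, transpose_mul, hit]
  simp only [Matrix.mul_add, Matrix.add_mul, Matrix.mul_sub, Matrix.sub_mul,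
    Matrix.mul_assoc, hc1, hc2]
  abel

end Stmt12Aux

open Stmt12Aux

theorem stmt12 {n m d T : ℕ}
    (Xminus Xplus : Matrix (Fin n) (Fin T) ℝ) (Uminus : Matrix (Fin m) (Fin T) ℝ)
    (E : Matrix (Fin n) (Fin d) ℝ)
    (Ph11 : Matrix (Fin d) (Fin d) ℝ) (Ph12 : Matrix (Fin d) (Fin T) ℝ)
    (Ph22 : Matrix (Fin T) (Fin T) ℝ)
    (h11 : Ph11.IsSymm) (h22 : Ph22.IsSymm)
    (h22neg : (-Ph22).PosDef)
    (hSchur : (Ph11 - Ph12 * Ph22⁻¹ * Ph12ᵀ).PosSemidef)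
    (Φ : Matrix (Fin d ⊕ Fin T) (Fin d ⊕ Fin T) ℝ)
    (hΦ : Φ = fromBlocks Ph11 Ph12 Ph12ᵀ Ph22)
    (ΦE : Matrix (Fin n ⊕ Fin T) (Fin n ⊕ Fin T) ℝ)
    (hΦE : ΦE = fromBlocks E 0 0 (1 : Matrix (Fin T) (Fin T) ℝ) * Φ *
      fromBlocks Eᵀ 0 0 (1 : Matrix (Fin T) (Fin T) ℝ))
    (L : Matrix (Fin n ⊕ (Fin n ⊕ Fin m)) (Fin n ⊕ Fin T) ℝ)
    (hL : L = fromBlocks 1 Xplus 0 (fromRows (-Xminus) (-Uminus)))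
    (Nk : Matrix (Fin n ⊕ (Fin n ⊕ Fin m)) (Fin n ⊕ (Fin n ⊕ Fin m)) ℝ)
    (hNk : Nk = L * ΦE * Lᵀ)
    (A : Matrix (Fin n) (Fin n) ℝ) (B : Matrix (Fin n) (Fin m) ℝ) :
    (∃ W : Matrix (Fin d) (Fin T) ℝ,
        ((fromRows (1 : Matrix (Fin d) (Fin d) ℝ) Wᵀ)ᵀ * Φ *
            fromRows (1 : Matrix (Fin d) (Fin d) ℝ) Wᵀ).PosSemidef ∧
        Xplus = A * Xminus + B * Uminus + E * W)
      ↔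
    ((fromRows (1 : Matrix (Fin n) (Fin n) ℝ) (fromRows Aᵀ Bᵀ))ᵀ * Nk *
        fromRows (1 : Matrix (Fin n) (Fin n) ℝ) (fromRows Aᵀ Bᵀ)).PosSemidef := by
  subst hΦ hΦE hL hNk
  -- invertibility of Ph22
  have hdetneg : IsUnit (-Ph22).det := h22neg.det_pos.ne'.isUnit
  have hdet : IsUnit Ph22.det := by
    refine isUnit_iff_ne_zero.mpr fun h0 => ?_
    apply h22neg.det_pos.ne'
    rw [Matrix.det_neg, h0, mul_zero]
  have hsym22 : Ph22ᵀ = Ph22 := h22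
  have hinv1 : Ph22 * Ph22⁻¹ = 1 := Matrix.mul_nonsing_inv _ hdet
  have hinv2 : Ph22⁻¹ * Ph22 = 1 := Matrix.nonsing_inv_mul _ hdet
  have hsyminv : Ph22⁻¹ᵀ = Ph22⁻¹ := by rw [Matrix.transpose_nonsing_inv, hsym22]
  set G : Matrix (Fin n) (Fin T) ℝ := Xplus - A * Xminus - B * Uminus with hGdef
  -- the LHS quadratic form
  have hLHSq : ∀ W : Matrix (Fin d) (Fin T) ℝ,
      (fromRows (1 : Matrix (Fin d) (Fin d) ℝ) Wᵀ)ᵀ * fromBlocks Ph11 Ph12 Ph12ᵀ Ph22 *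
          fromRows (1 : Matrix (Fin d) (Fin d) ℝ) Wᵀ
        = Ph11 + Ph12 * Wᵀ + W * Ph12ᵀ + W * Ph22 * Wᵀ := by
    intro W
    rw [quad_fromRows]
    simp [transpose_one, Matrix.one_mul, Matrix.mul_one, transpose_transpose]
  -- the RHS quadratic form
  have hT1 : (fromRows (1 : Matrix (Fin n) (Fin n) ℝ) (fromRows Aᵀ Bᵀ))ᵀ *
        fromBlocks (1 : Matrix (Fin n) (Fin n) ℝ) Xplus 0 (fromRows (-Xminus) (-Uminus)) *
        fromBlocks E 0 0 (1 : Matrix (Fin T) (Fin T) ℝ)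
      = fromCols E G := by
    rw [transpose_fromRows, transpose_fromRows, transpose_one, transpose_transpose,
      transpose_transpose, fromCols_mul_fromBlocks, fromCols_mul_fromRows,
      fromCols_mul_fromBlocks]
    simp only [Matrix.one_mul, Matrix.mul_one, Matrix.mul_zero, Matrix.zero_mul,
      Matrix.mul_neg, add_zero, zero_add, Matrix.mul_one]
    congr 1
    rw [hGdef]
    abel
  have hD : (fromBlocks Eᵀ 0 0 (1 : Matrix (Fin T) (Fin T) ℝ))
      = (fromBlocks E 0 0 (1 : Matrix (Fin T) (Fin T) ℝ))ᵀ := by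
    rw [fromBlocks_transpose, transpose_zero, transpose_zero, transpose_one]
  have hmain : (fromRows (1 : Matrix (Fin n) (Fin n) ℝ) (fromRows Aᵀ Bᵀ))ᵀ *
        (fromBlocks (1 : Matrix (Fin n) (Fin n) ℝ) Xplus 0 (fromRows (-Xminus) (-Uminus)) *
          (fromBlocks E 0 0 (1 : Matrix (Fin T) (Fin T) ℝ) * fromBlocks Ph11 Ph12 Ph12ᵀ Ph22 *
              fromBlocks Eᵀ 0 0 (1 : Matrix (Fin T) (Fin T) ℝ)) *
          (fromBlocks (1 : Matrix (Fin n) (Fin n) ℝ) Xplus 0 (fromRows (-Xminus) (-Uminus)))ᵀ) *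
        fromRows (1 : Matrix (Fin n) (Fin n) ℝ) (fromRows Aᵀ Bᵀ)
      = E * Ph11 * Eᵀ + E * Ph12 * Gᵀ + G * Ph12ᵀ * Eᵀ + G * Ph22 * Gᵀ := by
    have step : (fromRows (1 : Matrix (Fin n) (Fin n) ℝ) (fromRows Aᵀ Bᵀ))ᵀ *
          (fromBlocks (1 : Matrix (Fin n) (Fin n) ℝ) Xplus 0 (fromRows (-Xminus) (-Uminus)) *
            (fromBlocks E 0 0 (1 : Matrix (Fin T) (Fin T) ℝ) * fromBlocks Ph11 Ph12 Ph12ᵀ Ph22 *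
              fromBlocks Eᵀ 0 0 (1 : Matrix (Fin T) (Fin T) ℝ)) *
            (fromBlocks (1 : Matrix (Fin n) (Fin n) ℝ) Xplus 0 (fromRows (-Xminus) (-Uminus)))ᵀ) *
          fromRows (1 : Matrix (Fin n) (Fin n) ℝ) (fromRows Aᵀ Bᵀ)
        = (fromCols E G) * fromBlocks Ph11 Ph12 Ph12ᵀ Ph22 * (fromCols E G)ᵀ := by
      rw [← hT1, hD]
      simp only [Matrix.transpose_mul, Matrix.transpose_transpose, Matrix.mul_assoc]
    rw [step, quad_fromColumns]
  constructor
  · rintro ⟨W, hWpsd, hXp⟩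
    have hGW : G = E * W := by rw [hGdef, hXp]; abel
    rw [hmain]
    rw [hLHSq] at hWpsd
    have hfact : E * Ph11 * Eᵀ + E * Ph12 * Gᵀ + G * Ph12ᵀ * Eᵀ + G * Ph22 * Gᵀ
        = E * (Ph11 + Ph12 * Wᵀ + W * Ph12ᵀ + W * Ph22 * Wᵀ) * Eᵀ := by
      rw [hGW]
      simp only [Matrix.transpose_mul, Matrix.mul_add, Matrix.add_mul, Matrix.mul_assoc]
    rw [hfact]
    have := hWpsd.mul_mul_conjTranspose_same E
    rwa [ct_eq] at this
  · intro hpsd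
    rw [hmain, complete_square2 Ph11 Ph12 Ph22 hinv1 hinv2 hsyminv E G] at hpsd
    have hpsd' : (E * (Ph11 - Ph12 * Ph22⁻¹ * Ph12ᵀ) * Eᵀ
        - (G + E * (Ph12 * Ph22⁻¹)) * (-Ph22) * (G + E * (Ph12 * Ph22⁻¹))ᵀ).PosSemidef := by
      rwa [Matrix.mul_neg, Matrix.neg_mul, sub_neg_eq_add]
    obtain ⟨V, hEV, hVpsd⟩ := key E (G + E * (Ph12 * Ph22⁻¹)) hSchur h22neg hpsd'
    refine ⟨V - Ph12 * Ph22⁻¹, ?_, ?_⟩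
    · rw [hLHSq, complete_square Ph11 Ph12 Ph22 hinv1 hinv2 hsyminv, sub_add_cancel]
      rwa [Matrix.mul_neg, Matrix.neg_mul, sub_neg_eq_add] at hVpsd
    · have hEW : E * (V - Ph12 * Ph22⁻¹) = G := by
        rw [Matrix.mul_sub, hEV]
        abel
      rw [hGdef] at hEW
      rw [hEW]
      abel
end

section
/- Let P ∈ 𝕊^n with P ≥ 0, A ∈ ℝ^{n×n}, E ∈ ℝ^{n×d}, C ∈ ℝ^{p×n}, F ∈ ℝ^{p×d}, and S ∈ 𝕊^{d+p} with inertia (p, 0, d). Suppose [I, 0; A, E]ᵀ [P, 0; 0, −P] [I, 0; A, E] + [0, I; C, F]ᵀ S [0, I; C, F] ≥ 0. Then for every ξ ∈ ker P: (i) [0, I; Cξ, F]ᵀ S [0, I; Cξ, F] ≥ 0 as a (1+d)×(1+d) matrix, (ii) Cξ = 0, and (iii) P A ξ = 0. -/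
open Matrix

lemma aux_conj_form {a b : Type*} [Fintype a] [Fintype b] (X : Matrix a b ℝ)
    (M : Matrix a a ℝ) (v : b → ℝ) :
    v ⬝ᵥ (Xᵀ * M * X) *ᵥ v = (X *ᵥ v) ⬝ᵥ M *ᵥ (X *ᵥ v) := by
  rw [← mulVec_mulVec, ← mulVec_mulVec, dotProduct_mulVec, vecMul_transpose]

lemma aux_col_mulVec {p : ℕ} (w : Fin p → ℝ) (a : Fin 1 → ℝ) :
    Matrix.replicateCol (Fin 1) w *ᵥ a = a 0 • w := by
  funext i
  simp [Matrix.replicateCol, mulVec, dotProduct, mul_comm]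

theorem stmt13 {n d p : ℕ}
    (P : Matrix (Fin n) (Fin n) ℝ) (hPsymm : P.IsSymm) (hP : P.PosSemidef)
    (A : Matrix (Fin n) (Fin n) ℝ) (E : Matrix (Fin n) (Fin d) ℝ)
    (C : Matrix (Fin p) (Fin n) ℝ) (F : Matrix (Fin p) (Fin d) ℝ)
    (S : Matrix (Fin d ⊕ Fin p) (Fin d ⊕ Fin p) ℝ) (hS : S.IsHermitian)
    (hSneg : inertiaNeg hS = p) (hSzero : inertiaZero hS = 0) (hSpos : inertiaPos hS = d)
    (hLMI : ((fromBlocks 1 0 A E : Matrix (Fin n ⊕ Fin n) (Fin n ⊕ Fin d) ℝ)ᵀ * fromBlocks P 0 0 (-P) * (fromBlocks 1 0 A E : Matrix (Fin n ⊕ Fin n) (Fin n ⊕ Fin d) ℝ) +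
        (fromBlocks 0 1 C F : Matrix (Fin d ⊕ Fin p) (Fin n ⊕ Fin d) ℝ)ᵀ * S * (fromBlocks 0 1 C F : Matrix (Fin d ⊕ Fin p) (Fin n ⊕ Fin d) ℝ)).PosSemidef) :
    ∀ ξ : Fin n → ℝ, P.mulVec ξ = 0 →
      ((fromBlocks 0 1 (Matrix.replicateCol (Fin 1) (C.mulVec ξ)) F : Matrix (Fin d ⊕ Fin p) (Fin 1 ⊕ Fin d) ℝ)ᵀ * S *
          (fromBlocks 0 1 (Matrix.replicateCol (Fin 1) (C.mulVec ξ)) F : Matrix (Fin d ⊕ Fin p) (Fin 1 ⊕ Fin d) ℝ)).PosSemidef ∧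
      C.mulVec ξ = 0 ∧
      P.mulVec (A.mulVec ξ) = 0 := by
  intro ξ hξ
  classical
  set B : Matrix (Fin d ⊕ Fin p) (Fin 1 ⊕ Fin d) ℝ :=
    fromBlocks 0 1 (Matrix.replicateCol (Fin 1) (C.mulVec ξ)) F with hB
  -- The quadratic form of the LMI evaluated at Sum.elim x u
  have key : ∀ (x : Fin n → ℝ) (u : Fin d → ℝ),
      0 ≤ x ⬝ᵥ (P *ᵥ x) - (A *ᵥ x + E *ᵥ u) ⬝ᵥ (P *ᵥ (A *ᵥ x + E *ᵥ u)) +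
        (Sum.elim u (C *ᵥ x + F *ᵥ u)) ⬝ᵥ (S *ᵥ Sum.elim u (C *ᵥ x + F *ᵥ u)) := by
    intro x u
    have h := hLMI.dotProduct_mulVec_nonneg (Sum.elim x u)
    rw [star_trivial, add_mulVec, dotProduct_add, aux_conj_form, aux_conj_form] at h
    simpa [fromBlocks_mulVec, sumElim_dotProduct_sumElim, one_mulVec, zero_mulVec,
      neg_mulVec, sub_eq_add_neg] using h
  -- B *ᵥ z description
  have hBz : ∀ z : Fin 1 ⊕ Fin d → ℝ,
      B *ᵥ z = Sum.elim (z ∘ Sum.inr)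
        (z (Sum.inl 0) • (C *ᵥ ξ) + F *ᵥ (z ∘ Sum.inr)) := by
    intro z
    have hz : z = Sum.elim (z ∘ Sum.inl) (z ∘ Sum.inr) := (Sum.elim_comp_inl_inr z).symm
    rw [hB]
    conv_lhs => rw [hz]
    rw [fromBlocks_mulVec, aux_col_mulVec]
    simp [Function.comp]
  -- B *ᵥ z equals G2 applied to (z (inl 0) • ξ, z ∘ inr)
  have hform : ∀ z : Fin 1 ⊕ Fin d → ℝ, 0 ≤ (B *ᵥ z) ⬝ᵥ (S *ᵥ (B *ᵥ z)) := by
    intro z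
    have h := key (z (Sum.inl 0) • ξ) (z ∘ Sum.inr)
    rw [mulVec_smul, hξ, smul_zero, dotProduct_zero, mulVec_smul, mulVec_smul] at h
    rw [hBz z]
    have hPnn := hP.dotProduct_mulVec_nonneg (z (Sum.inl 0) • (A *ᵥ ξ) + E *ᵥ (z ∘ Sum.inr))
    rw [star_trivial] at hPnn
    linarith
  -- Part (i)
  have parti : (Bᵀ * S * B).PosSemidef := by
    refine PosSemidef.of_dotProduct_mulVec_nonneg ?_ ?_
    · rw [← conjTranspose_eq_transpose_of_trivial]
      exact isHermitian_conjTranspose_mul_mul _ hS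
    · intro z
      rw [star_trivial, aux_conj_form]
      exact hform z
  -- Part (ii)
  have partii : C *ᵥ ξ = 0 := by
    by_contra hne
    set U : Matrix (Fin d ⊕ Fin p) (Fin d ⊕ Fin p) ℝ :=
      ((hS.eigenvectorUnitary : Matrix.unitaryGroup (Fin d ⊕ Fin p) ℝ) : Matrix (Fin d ⊕ Fin p) (Fin d ⊕ Fin p) ℝ) with hU
    set lam := hS.eigenvalues with hlam
    have hzero : ∀ i, lam i ≠ 0 := by
      intro i hi
      have h0 : (Finset.univ.filter fun i => hS.eigenvalues i = 0) = ∅ :=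
        Finset.card_eq_zero.mp (by rw [← hSzero]; rfl)
      have : i ∈ (Finset.univ.filter fun i => hS.eigenvalues i = 0) :=
        Finset.mem_filter.mpr ⟨Finset.mem_univ _, hi⟩
      rw [h0] at this
      exact absurd this (Finset.notMem_empty i)
    have hcard : Fintype.card {i : Fin d ⊕ Fin p // 0 < lam i} = d := by
      rw [Fintype.card_subtype]
      exact hSpos
    set L : ((Fin 1 ⊕ Fin d) → ℝ) →ₗ[ℝ] ({i : Fin d ⊕ Fin p // 0 < lam i} → ℝ) :=
      (LinearMap.funLeft ℝ ℝ Subtype.val).comp (star U * B).mulVecLin with hL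
    have hnotinj : ¬ Function.Injective L := by
      intro hinj
      have h1 := LinearMap.finrank_le_finrank_of_injective hinj
      rw [Module.finrank_pi, Module.finrank_pi, hcard] at h1
      simp only [Fintype.card_sum, Fintype.card_fin] at h1
      omega
    rw [injective_iff_map_eq_zero] at hnotinj
    push_neg at hnotinj
    obtain ⟨z, hz1, hz2⟩ := hnotinj
    set y : Fin d ⊕ Fin p → ℝ := (star U) *ᵥ (B *ᵥ z) with hy
    have hypos : ∀ i, 0 < lam i → y i = 0 := by
      intro i hi
      have := congrFun hz1 ⟨i, hi⟩
      simpa [hL, hy, LinearMap.funLeft, mulVec_mulVec] using this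
    have hquad : ∀ w : Fin d ⊕ Fin p → ℝ,
        w ⬝ᵥ (S *ᵥ w) = ∑ i, lam i * ((star U *ᵥ w) i) ^ 2 := by
      intro w
      nth_rewrite 1 [hS.spectral_theorem]
      rw [Unitary.conjStarAlgAut_apply, ← mulVec_mulVec, ← mulVec_mulVec, dotProduct_mulVec]
      have hvm : w ᵥ* (U : Matrix _ _ ℝ) = star U *ᵥ w := by
        rw [star_eq_conjTranspose, conjTranspose_eq_transpose_of_trivial,
          ← vecMul_transpose, transpose_transpose]
      rw [hvm]
      have hdiag : diagonal (RCLike.ofReal ∘ hS.eigenvalues) *ᵥ (star U *ᵥ w)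
          = fun i => lam i * (star U *ᵥ w) i := by
        funext i
        simp [mulVec_diagonal, hlam]
      rw [hdiag]
      simp only [dotProduct]
      exact Finset.sum_congr rfl fun i _ => by ring
    have hle : ∑ i, lam i * (y i) ^ 2 ≤ 0 := by
      apply Finset.sum_nonpos
      intro i _
      rcases lt_or_ge 0 (lam i) with h | h
      · rw [hypos i h]; simp
      · exact mul_nonpos_of_nonpos_of_nonneg h (sq_nonneg _)
    have heq : ∑ i, lam i * (y i) ^ 2 = 0 := by
      have h0 := hform z
      rw [hquad (B *ᵥ z), ← hy] at h0
      exact le_antisymm hle h0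
    have hterm := (Finset.sum_eq_zero_iff_of_nonpos (fun i _ => by
      rcases lt_or_ge 0 (lam i) with h | h
      · rw [hypos i h]; simp
      · exact mul_nonpos_of_nonpos_of_nonneg h (sq_nonneg _))).mp heq
    have hy0 : y = 0 := by
      funext i
      have := hterm i (Finset.mem_univ i)
      rcases mul_eq_zero.mp this with h | h
      · exact absurd h (hzero i)
      · exact pow_eq_zero_iff (by norm_num) |>.mp h
    have hBz0 : B *ᵥ z = 0 := by
      have h1 : (U : Matrix _ _ ℝ) * star U = 1 :=
        (Matrix.mem_unitaryGroup_iff).mp hS.eigenvectorUnitary.2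
      calc B *ᵥ z = ((U : Matrix _ _ ℝ) * star U) *ᵥ (B *ᵥ z) := by rw [h1, one_mulVec]
        _ = (U : Matrix _ _ ℝ) *ᵥ y := by rw [← mulVec_mulVec, ← hy]
        _ = 0 := by rw [hy0, mulVec_zero]
    rw [hBz z] at hBz0
    have htop : z ∘ Sum.inr = 0 := by
      funext j
      exact congrFun hBz0 (Sum.inl j)
    have hbot : z (Sum.inl 0) • (C *ᵥ ξ) = 0 := by
      have h2 : z (Sum.inl 0) • (C *ᵥ ξ) + F *ᵥ (z ∘ Sum.inr) = 0 := by
        funext j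
        exact congrFun hBz0 (Sum.inr j)
      rw [htop, mulVec_zero, add_zero] at h2
      exact h2
    have hz00 : z (Sum.inl 0) = 0 := by
      rcases smul_eq_zero.mp hbot with h | h
      · exact h
      · exact absurd h hne
    apply hz2
    funext i
    rcases i with i | j
    · rw [Fin.fin_one_eq_zero i]; exact hz00
    · exact congrFun htop j
  refine ⟨parti, partii, ?_⟩
  -- Part (iii)
  have h := key ξ 0
  rw [hξ, dotProduct_zero, mulVec_zero, add_zero, mulVec_zero, add_zero, partii,
    Sum.elim_zero_zero, zero_dotProduct] at h
  have hnn := hP.dotProduct_mulVec_nonneg (A *ᵥ ξ)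
  rw [star_trivial] at hnn
  have h0 : (A *ᵥ ξ) ⬝ᵥ (P *ᵥ (A *ᵥ ξ)) = 0 := by linarith
  have := hP.dotProduct_mulVec_zero_iff (A *ᵥ ξ)
  rw [star_trivial] at this
  exact this.mp h0
end
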